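/- arXiv:2406.06008 — 9 statements merged into one kernel-verified Lean document; each statement's English description precedes it below -/
import Mathlib

section
/- For every element A of a complex Banach algebra and every natural number l, φ_{l+1}(A) = (1/l!) ∫_0^1 τ^l · φ_0((1−τ)^2 A) dτ, where the integral is the Bochner integral of the continuous algebra-valued integrand. -/
/-- The oscillatory function `φ_l(A) = ∑_{k=0}^∞ (-1)^k A^k / (2k+l)!` on a
complex Banach algebra. -/
noncomputable def osc {𝔸 : Type*} [NormedRing 𝔸] [NormedAlgebra ℂ 𝔸] [CompleteSpace 𝔸]
    (l : ℕ) (A : 𝔸) : 𝔸 :=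
  ∑' k : ℕ, ((-1 : ℂ) ^ k / (Nat.factorial (2 * k + l) : ℂ)) • A ^ k

section aux
variable {𝔸 : Type*} [NormedRing 𝔸] [NormedAlgebra ℂ 𝔸] [CompleteSpace 𝔸]

lemma real_smul_eq (r : ℝ) (x : 𝔸) : r • x = ((r : ℂ)) • x := by
  rw [← smul_one_smul ℂ r x, Complex.real_smul, mul_one]

lemma summable_aux (X : 𝔸) (m : ℕ) :
    Summable (fun k : ℕ => ‖X ^ k‖ / ((2 * k + m).factorial : ℝ)) := by
  have h1 : Summable (fun k : ℕ => ‖X‖ ^ (k+1) / ((k+1).factorial : ℝ)) :=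
    (summable_nat_add_iff 1).2 (Real.summable_pow_div_factorial ‖X‖)
  have h2 : Summable (fun k : ℕ => ‖X ^ (k+1)‖ / ((2 * (k+1) + m).factorial : ℝ)) := by
    refine Summable.of_nonneg_of_le (fun k => by positivity) (fun k => ?_) h1
    apply div_le_div₀ (by positivity) (norm_pow_le' X k.succ_pos) (by positivity)
    exact_mod_cast Nat.factorial_le (by omega)
  exact (summable_nat_add_iff 1).1 h2

lemma summable_osc (m : ℕ) (X : 𝔸) :
    Summable (fun k : ℕ => ((-1 : ℂ) ^ k / (Nat.factorial (2 * k + m) : ℂ)) • X ^ k) := by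
  apply Summable.of_norm
  have : ∀ k : ℕ, ‖((-1 : ℂ) ^ k / (Nat.factorial (2 * k + m) : ℂ)) • X ^ k‖
      = ‖X ^ k‖ / ((2 * k + m).factorial : ℝ) := by
    intro k
    rw [norm_smul, norm_div, norm_pow, norm_neg, norm_one, one_pow, Complex.norm_natCast]
    ring
  simpa only [this] using summable_aux X m

lemma hasSum_osc (m : ℕ) (X : 𝔸) :
    HasSum (fun k : ℕ => ((-1 : ℂ) ^ k / (Nat.factorial (2 * k + m) : ℂ)) • X ^ k) (osc m X) :=
  (summable_osc m X).hasSum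

end aux

theorem nat_prod (l m : ℕ) : (l.factorial * ∏ j ∈ Finset.range (m+1), (l+1+j)) = (l+m+1).factorial := by
  induction m with
  | zero => simp [Nat.factorial_succ, mul_comm]
  | succ m ih =>
    rw [Finset.prod_range_succ, ← mul_assoc, ih,
      show l+(m+1)+1 = (l+m+1)+1 from by ring]
    conv_rhs => rw [Nat.factorial_succ]
    ring

theorem beta_nat (l m : ℕ) : ∫ τ in (0:ℝ)..1, (τ:ℂ)^l * (1-(τ:ℂ))^m
    = (l.factorial * m.factorial : ℂ) / ((l+m+1).factorial : ℂ) := by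
  have h := Complex.betaIntegral_eval_nat_add_one_right (u := (l:ℂ)+1) (by simp; positivity) m
  rw [Complex.betaIntegral] at h
  simp only [add_sub_cancel_right, Complex.cpow_natCast] at h
  rw [h]
  have h1 : (l.factorial : ℂ) ≠ 0 := by exact_mod_cast l.factorial_ne_zero
  have h2 : ((l+m+1).factorial : ℂ) ≠ 0 := by exact_mod_cast (l+m+1).factorial_ne_zero
  have hp : (∏ j ∈ Finset.range (m+1), ((l:ℂ)+1+j)) * (l.factorial : ℂ) = ((l+m+1).factorial : ℂ) := by
    have h3 : ((l.factorial * ∏ j ∈ Finset.range (m+1), (l+1+j) : ℕ) : ℂ) = ((l+m+1).factorial : ℂ) := by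
      exact_mod_cast congrArg (Nat.cast : ℕ → ℂ) (nat_prod l m)
    push_cast at h3
    linear_combination h3
  have hpne : (∏ j ∈ Finset.range (m+1), ((l:ℂ)+1+j)) ≠ 0 := by
    intro h0; rw [h0, zero_mul] at hp; exact h2 hp.symm
  field_simp
  linear_combination (-(m.factorial : ℂ)) * hp

/-- `φ_{l+1}(A) = (1/l!) ∫_0^1 τ^l φ_0((1-τ)^2 A) dτ`. -/
theorem osc_integral_formula_zero {𝔸 : Type*} [NormedRing 𝔸] [NormedAlgebra ℂ 𝔸]
    [CompleteSpace 𝔸] (l : ℕ) (A : 𝔸) :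
    osc (l + 1) A =
      ((Nat.factorial l : ℝ))⁻¹ •
        ∫ τ in (0 : ℝ)..1, τ ^ l • osc 0 ((((1 - τ : ℝ) : ℂ) ^ 2) • A) := by
  set c : ℕ → ℂ := fun k => (-1 : ℂ) ^ k / (Nat.factorial (2 * k + 0) : ℂ) with hc
  set F : ℕ → ℝ → 𝔸 := fun k τ => τ ^ l • (c k • ((((1 - τ : ℝ) : ℂ) ^ 2) • A) ^ k) with hF
  -- the exchange of sum and integral
  have key : HasSum (fun k => ∫ τ in (0:ℝ)..1, F k τ)
      (∫ τ in (0:ℝ)..1, τ ^ l • osc 0 ((((1 - τ : ℝ) : ℂ) ^ 2) • A)) := by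
    apply intervalIntegral.hasSum_integral_of_dominated_convergence
      (bound := fun k (_ : ℝ) => ‖A ^ k‖ / ((2 * k).factorial : ℝ))
    · intro k
      apply Continuous.aestronglyMeasurable
      fun_prop
    · intro k
      filter_upwards with τ hτ
      rw [Set.uIoc_of_le (by norm_num : (0:ℝ) ≤ 1)] at hτ
      have h1 : |τ| ≤ 1 := by rw [abs_le]; constructor <;> [linarith [hτ.1]; exact hτ.2]
      have h2 : ‖((1 - τ : ℝ) : ℂ)‖ ≤ 1 := by
        rw [Complex.norm_real, Real.norm_eq_abs, abs_le]
        constructor <;> [linarith [hτ.2]; linarith [hτ.1]]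
      have hck : ‖c k‖ = 1 / ((2 * k).factorial : ℝ) := by
        rw [hc]; simp only [norm_div, norm_pow, norm_neg, norm_one, one_pow,
          Complex.norm_natCast, add_zero]
      calc ‖F k τ‖ = |τ| ^ l * (‖c k‖ * (‖((1 - τ : ℝ) : ℂ)‖ ^ (2 * k) * ‖A ^ k‖)) := by
            rw [hF]
            simp only [smul_pow, ← pow_mul, norm_smul, Real.norm_eq_abs, abs_pow, norm_pow]
        _ ≤ 1 ^ l * (‖c k‖ * (1 ^ (2 * k) * ‖A ^ k‖)) := by
            gcongr
        _ = ‖A ^ k‖ / ((2 * k).factorial : ℝ) := by rw [hck]; ring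
    · exact Filter.Eventually.of_forall fun τ _ => by
        simpa using summable_aux A 0
    · exact intervalIntegrable_const
    · refine Filter.Eventually.of_forall fun τ _ => ?_
      exact (hasSum_osc 0 _).const_smul _
  -- compute each integral
  have hint : ∀ k : ℕ, ∫ τ in (0:ℝ)..1, F k τ
      = (((l.factorial : ℂ) * ((2*k).factorial : ℂ) / ((l+2*k+1).factorial : ℂ)) * c k) • A ^ k := by
    intro k
    have hFk : ∀ τ : ℝ, F k τ = (((τ:ℂ) ^ l * (1 - (τ:ℂ)) ^ (2*k)) * c k) • A ^ k := by
      intro τ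
      rw [hF]
      simp only [smul_pow, ← pow_mul]
      rw [real_smul_eq, smul_smul, smul_smul]
      congr 1
      push_cast
      ring
    simp_rw [hFk]
    rw [intervalIntegral.integral_smul_const, intervalIntegral.integral_mul_const, beta_nat l (2*k)]
  -- assemble
  have final : HasSum (fun k => ((-1 : ℂ) ^ k / (Nat.factorial (2 * k + (l+1)) : ℂ)) • A ^ k)
      (((Nat.factorial l : ℝ))⁻¹ •
        ∫ τ in (0 : ℝ)..1, τ ^ l • osc 0 ((((1 - τ : ℝ) : ℂ) ^ 2) • A)) := by
    have := key.const_smul ((Nat.factorial l : ℝ))⁻¹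
    convert this using 2 with k
    rw [hint k, real_smul_eq, smul_smul]
    congr 1
    rw [hc]
    have h1 : (l.factorial : ℂ) ≠ 0 := by exact_mod_cast l.factorial_ne_zero
    have h2 : ((l+2*k+1).factorial : ℂ) ≠ 0 := by exact_mod_cast (l+2*k+1).factorial_ne_zero
    have h3 : ((2*k).factorial : ℂ) ≠ 0 := by exact_mod_cast (2*k).factorial_ne_zero
    have h4 : (2*k+(l+1)) = (l+2*k+1) := by omega
    rw [h4]
    push_cast
    field_simp
    ring_nf
    exact (mul_inv_cancel₀ (by exact_mod_cast (k*2).factorial_ne_zero)).symm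
  rw [osc]
  exact final.tsum_eq
end

section
/- Let A be an element of a complex Banach algebra, let l ≥ 2 be an integer, and let a, b be real numbers. Then (a+b)^l · φ_l((a+b)^2 A) = a^l · φ_0(b^2 A)·φ_l(a^2 A) + a^{l−1} b · φ_1(b^2 A)·φ_{l−1}(a^2 A) + Σ_{k=2}^{l} (a^{l−k} b^k/(l−k)!) · φ_k(b^2 A). -/
/-!
Both sides are power series in `A`. With `N = 2n + l`, the coefficient of `A ^ n` on the left is
`(-1)^n (a + b)^N / N!`, and the binomial theorem writes `(a + b)^N / N!` as
`∑_{m ≤ N} b^m / m! · a^(N-m) / (N-m)!`. Splitting `m` into the even values `2i ≤ 2n`, the odd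
values `2i + 1 ≤ 2n + 1` and the top values `2n + k` with `2 ≤ k ≤ l` gives exactly the Cauchy
product coefficients of `φ_0(b²A) · a^l φ_l(a²A)` and of `b φ_1(b²A) · a^(l-1) φ_(l-1)(a²A)`, and the
coefficients of the finite sum. All series converge absolutely, their coefficients being dominated
by those of an exponential series.
-/

open Finset
open scoped Nat

theorem add_pow_div_factorial {K : Type*} [Field K] [CharZero K] (a b : K) (N : ℕ) :
    (a + b) ^ N / N ! = ∑ m ∈ range (N + 1), b ^ m / m ! * (a ^ (N - m) / (N - m)!) := by
  rw [add_comm, add_pow, sum_div]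
  refine sum_congr rfl fun m hm => ?_
  have hN : (N ! : K) ≠ 0 := Nat.cast_ne_zero.mpr N.factorial_ne_zero
  rw [Nat.cast_choose K (Nat.lt_succ_iff.mp (mem_range.mp hm))]
  field_simp

section RangeSplitting

variable {M : Type*} [AddCommMonoid M] (f : ℕ → M)

theorem sum_range_two_mul_eq_sum_even_add_sum_odd (n : ℕ) :
    ∑ m ∈ range (2 * n), f m = ∑ i ∈ range n, f (2 * i) + ∑ i ∈ range n, f (2 * i + 1) := by
  induction n with
  | zero => simp
  | succ n ih =>
    rw [mul_add, mul_one, sum_range_succ, sum_range_succ, ih, sum_range_succ, sum_range_succ]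
    abel

theorem sum_range_eq_sum_even_add_sum_odd_add_sum_Icc (n : ℕ) {l : ℕ} (hl : 1 ≤ l) :
    ∑ m ∈ range (2 * n + l + 1), f m =
      ∑ i ∈ range (n + 1), f (2 * i) + ∑ i ∈ range (n + 1), f (2 * i + 1) +
        ∑ k ∈ Icc 2 l, f (2 * n + k) := by
  rw [show 2 * n + l + 1 = 2 * (n + 1) + (l - 1) by omega, sum_range_add,
    sum_range_two_mul_eq_sum_even_add_sum_odd,
    ← Ico_add_one_right_eq_Icc, sum_Ico_eq_sum_range]
  congr 1
  exact sum_congr (congrArg range (by omega)) fun k _ => by congr 1; omega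

end RangeSplitting

noncomputable def oscCoeff (l : ℕ) (t : ℂ) (n : ℕ) : ℂ :=
  (-1) ^ n * (t ^ (2 * n + l) / (2 * n + l)!)

/-- The `i`-th summand on the right is the `m = 2i + p` term of the binomial expansion of
`(a + b)^N / N!` with `N = 2n + p + q`. -/
theorem sum_antidiagonal_oscCoeff_mul (p q : ℕ) (a b : ℂ) (n : ℕ) :
    ∑ x ∈ antidiagonal n, oscCoeff p b x.1 * oscCoeff q a x.2 =
      (-1) ^ n * ∑ i ∈ range (n + 1), b ^ (2 * i + p) / (2 * i + p)! *
        (a ^ (2 * n + p + q - (2 * i + p)) / (2 * n + p + q - (2 * i + p))!) := by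
  rw [Nat.sum_antidiagonal_eq_sum_range_succ_mk, mul_sum]
  refine sum_congr rfl fun i hi => ?_
  have hi : i ≤ n := Nat.lt_succ_iff.mp (mem_range.mp hi)
  obtain ⟨j, rfl⟩ := Nat.exists_eq_add_of_le hi
  rw [show 2 * (i + j) + p + q - (2 * i + p) = 2 * j + q by omega, Nat.add_sub_cancel_left,
    oscCoeff, oscCoeff, pow_add]
  ring

theorem oscCoeff_add {l : ℕ} (hl : 1 ≤ l) (a b : ℂ) (n : ℕ) :
    oscCoeff l (a + b) n =
      ∑ x ∈ antidiagonal n, oscCoeff 0 b x.1 * oscCoeff l a x.2 +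
        ∑ x ∈ antidiagonal n, oscCoeff 1 b x.1 * oscCoeff (l - 1) a x.2 +
        ∑ k ∈ Icc 2 l, a ^ (l - k) / (l - k)! * oscCoeff k b n := by
  rw [sum_antidiagonal_oscCoeff_mul, sum_antidiagonal_oscCoeff_mul,
    show 2 * n + 1 + (l - 1) = 2 * n + 0 + l by omega, oscCoeff, add_pow_div_factorial,
    sum_range_eq_sum_even_add_sum_odd_add_sum_Icc _ _ hl, mul_add, mul_add, mul_sum (Icc 2 l)]
  congr 1
  refine sum_congr rfl fun k hk => ?_
  rw [show 2 * n + l - (2 * n + k) = l - k by omega, oscCoeff]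
  ring

section PowerSeries

variable {𝕜 𝔸 : Type*} [NormedField 𝕜] [NormedRing 𝔸]

theorem summable_norm_smul_pow [NormedSpace 𝕜 𝔸] {c : ℕ → 𝕜} {A : 𝔸}
    (hc : Summable fun n => ‖c n‖ * ‖A‖ ^ n) : Summable fun n => ‖c n • A ^ n‖ := by
  refine Summable.of_norm_bounded_eventually_nat hc ?_
  filter_upwards [Filter.eventually_gt_atTop 0] with n hn
  rw [norm_norm]
  exact (norm_smul_le _ _).trans (by gcongr; exact norm_pow_le' A hn)

theorem hasSum_sum_antidiagonal_smul_pow_of_summable_norm [NormedAlgebra 𝕜 𝔸] [CompleteSpace 𝔸]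
    {c d : ℕ → 𝕜} {A : 𝔸} (hc : Summable fun n => ‖c n • A ^ n‖)
    (hd : Summable fun n => ‖d n • A ^ n‖) :
    HasSum (fun n => (∑ x ∈ antidiagonal n, c x.1 * d x.2) • A ^ n)
      ((∑' n, c n • A ^ n) * ∑' n, d n • A ^ n) := by
  have h_term : ∀ n, ∑ x ∈ antidiagonal n, c x.1 • A ^ x.1 * d x.2 • A ^ x.2 =
      (∑ x ∈ antidiagonal n, c x.1 * d x.2) • A ^ n := fun n => by
    rw [sum_smul]
    refine sum_congr rfl fun x hx => ?_
    rw [smul_mul_smul_comm, ← pow_add, mem_antidiagonal.mp hx]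
  have h := (summable_norm_sum_mul_antidiagonal_of_summable_norm hc hd).of_norm.hasSum
  rwa [← tsum_mul_tsum_eq_tsum_sum_antidiagonal_of_summable_norm hc hd, funext h_term] at h

end PowerSeries

theorem summable_norm_oscCoeff_mul_pow (l : ℕ) (t : ℂ) {r : ℝ} (hr : 0 ≤ r) :
    Summable fun n => ‖oscCoeff l t n‖ * r ^ n := by
  refine ((Real.summable_pow_div_factorial (‖t‖ ^ 2 * r)).mul_left (‖t‖ ^ l)).of_nonneg_of_le
    (fun n => by positivity) fun n => ?_
  have hfac : (n ! : ℝ) ≤ (2 * n + l)! := by exact_mod_cast Nat.factorial_le (by omega)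
  calc ‖oscCoeff l t n‖ * r ^ n = ‖t‖ ^ l * ((‖t‖ ^ 2 * r) ^ n / (2 * n + l)!) := by
        simp only [oscCoeff, norm_mul, norm_div, norm_pow, norm_neg, norm_one, one_pow, one_mul,
          Complex.norm_natCast]
        ring
    _ ≤ ‖t‖ ^ l * ((‖t‖ ^ 2 * r) ^ n / n !) := by gcongr

section Osc

variable {𝔸 : Type*} [NormedRing 𝔸] [NormedAlgebra ℂ 𝔸]

theorem summable_norm_oscCoeff_smul_pow (l : ℕ) (t : ℂ) (A : 𝔸) :
    Summable fun n => ‖oscCoeff l t n • A ^ n‖ :=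
  summable_norm_smul_pow (summable_norm_oscCoeff_mul_pow l t (norm_nonneg A))

variable [CompleteSpace 𝔸]

theorem pow_smul_osc (l : ℕ) (t : ℂ) (A : 𝔸) :
    t ^ l • osc l (t ^ 2 • A) = ∑' n, oscCoeff l t n • A ^ n := by
  rw [osc, ← tsum_const_smul'']
  refine tsum_congr fun n => ?_
  rw [smul_pow, smul_smul, smul_smul, oscCoeff, pow_add, ← pow_mul]
  congr 1
  ring

theorem hasSum_oscCoeff_smul_pow (l : ℕ) (t : ℂ) (A : 𝔸) :
    HasSum (fun n => oscCoeff l t n • A ^ n) (t ^ l • osc l (t ^ 2 • A)) := by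
  rw [pow_smul_osc]
  exact (summable_norm_oscCoeff_smul_pow l t A).of_norm.hasSum

end Osc

/-- the addition formula for `(a+b)^l φ_l((a+b)² A)`. -/
theorem osc_addition_formula {𝔸 : Type*} [NormedRing 𝔸] [NormedAlgebra ℂ 𝔸]
    [CompleteSpace 𝔸] (A : 𝔸) (l : ℕ) (hl : 2 ≤ l) (a b : ℝ) :
    (((a : ℂ) + b) ^ l) • osc l ((((a : ℂ) + b) ^ 2) • A) =
      ((a : ℂ) ^ l) • (osc 0 (((b : ℂ) ^ 2) • A) * osc l (((a : ℂ) ^ 2) • A)) +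
        ((a : ℂ) ^ (l - 1) * b) •
          (osc 1 (((b : ℂ) ^ 2) • A) * osc (l - 1) (((a : ℂ) ^ 2) • A)) +
        ∑ k ∈ Finset.Icc 2 l,
          ((a : ℂ) ^ (l - k) * (b : ℂ) ^ k / (Nat.factorial (l - k) : ℂ)) •
            osc k (((b : ℂ) ^ 2) • A) := by
  have hprod (p q : ℕ) := hasSum_sum_antidiagonal_smul_pow_of_summable_norm
    (summable_norm_oscCoeff_smul_pow p b A) (summable_norm_oscCoeff_smul_pow q a A)
  have h_rhs := ((hprod 0 l).add (hprod 1 (l - 1))).add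
    (hasSum_sum (s := Icc 2 l) fun k _ => (hasSum_oscCoeff_smul_pow k (b : ℂ) A).const_smul
      ((a : ℂ) ^ (l - k) / (l - k)!))
  refine (hasSum_oscCoeff_smul_pow l _ A).unique ?_
  convert h_rhs using 1
  · funext n
    simp only [oscCoeff_add (by omega : 1 ≤ l), add_smul, sum_smul, smul_smul]
  · simp only [← pow_smul_osc, pow_zero, one_smul, pow_one, smul_mul_assoc, mul_smul_comm,
      smul_smul, mul_div_right_comm]
end

section
/- Let A be an element of a complex Banach algebra, let l ≥ 2 be an integer, and let a, b be real numbers. Then (a+b)^{l−1} · φ_{l−1}((a+b)^2 A) = −a^l b · A·φ_1(b^2 A)·φ_l(a^2 A) + a^{l−1} · φ_0(b^2 A)·φ_{l−1}(a^2 A) + Σ_{k=2}^{l} (a^{l−k} b^{k−1}/(l−k)!) · φ_{k−1}(b^2 A). -/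
open Finset

/-- coefficient -/
noncomputable def occ (l : ℕ) (x : ℂ) (k : ℕ) : ℂ :=
  (-1 : ℂ) ^ k * x ^ (2 * k) / (Nat.factorial (2 * k + l) : ℂ)

section
variable {𝔸 : Type*} [NormedRing 𝔸] [NormedAlgebra ℂ 𝔸] [CompleteSpace 𝔸]

lemma norm_occ_le (l : ℕ) (x : ℂ) (k : ℕ) : ‖occ l x k‖ ≤ (‖x‖ ^ 2) ^ k / (Nat.factorial k : ℝ) := by
  have h1 : (Nat.factorial k : ℝ) ≤ (Nat.factorial (2 * k + l) : ℝ) := by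
    exact_mod_cast Nat.factorial_le (by omega)
  have h2 : (0:ℝ) < (Nat.factorial k : ℝ) := by positivity
  have h3 : (0:ℝ) < (Nat.factorial (2*k+l) : ℝ) := by positivity
  have : ‖occ l x k‖ = ‖x‖ ^ (2 * k) / (Nat.factorial (2 * k + l) : ℝ) := by
    rw [occ, norm_div, norm_mul, norm_pow, norm_pow, norm_neg, norm_one, one_pow, one_mul]
    simp [Complex.norm_natCast]
  rw [this, pow_mul]
  exact div_le_div_of_nonneg_left (by positivity) h2 h1

lemma norm_pow_le_aux (A : 𝔸) (k : ℕ) : ‖A ^ k‖ ≤ max ‖(1:𝔸)‖ 1 * ‖A‖ ^ k := by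
  cases k with
  | zero => simpa using le_max_left ‖(1:𝔸)‖ 1
  | succ k =>
      calc ‖A ^ (k+1)‖ ≤ ‖A‖ ^ (k+1) := norm_pow_le' A (Nat.succ_pos k)
        _ ≤ max ‖(1:𝔸)‖ 1 * ‖A‖ ^ (k+1) :=
          le_mul_of_one_le_left (by positivity) (le_max_right _ _)

lemma summable_norm_coeff_smul (A : 𝔸) (r : ℝ) (f : ℕ → ℂ)
    (hf : ∀ k, ‖f k‖ ≤ r ^ k / (Nat.factorial k : ℝ)) :
    Summable fun k => ‖f k • A ^ k‖ := by
  set M := max ‖(1:𝔸)‖ 1 with hM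
  refine Summable.of_nonneg_of_le (fun _ => norm_nonneg _)
    (f := fun k => M * ((r * ‖A‖) ^ k / (Nat.factorial k : ℝ))) (fun k => ?_)
    (((Real.summable_pow_div_factorial (r * ‖A‖))).mul_left M)
  have h1 : ‖f k • A ^ k‖ = ‖f k‖ * ‖A ^ k‖ := norm_smul _ _
  rw [h1]
  calc ‖f k‖ * ‖A ^ k‖ ≤ (r ^ k / (Nat.factorial k : ℝ)) * (M * ‖A‖ ^ k) := by
        refine mul_le_mul (hf k) (norm_pow_le_aux A k) (norm_nonneg _)
          ((norm_nonneg (f k)).trans (hf k))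
    _ = M * ((r * ‖A‖) ^ k / (Nat.factorial k : ℝ)) := by rw [mul_pow]; ring

lemma summable_norm_occ_smul (A : 𝔸) (l : ℕ) (x : ℂ) :
    Summable fun k => ‖occ l x k • A ^ k‖ :=
  summable_norm_coeff_smul A (‖x‖ ^ 2) _ (norm_occ_le l x)

lemma osc_sq_smul (l : ℕ) (x : ℂ) (A : 𝔸) :
    osc l (x ^ 2 • A) = ∑' k : ℕ, occ l x k • A ^ k := by
  refine tsum_congr fun k => ?_
  rw [smul_pow, smul_smul, occ, ← pow_mul, mul_comm 2 k]
  ring_nf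

lemma antidiag_smul_eq (A : 𝔸) (f g : ℕ → ℂ) (k : ℕ) :
    ∑ ij ∈ Finset.HasAntidiagonal.antidiagonal k, (f ij.1 • A ^ ij.1) * (g ij.2 • A ^ ij.2)
      = (∑ i ∈ range (k+1), f i * g (k-i)) • A ^ k := by
  rw [Finset.Nat.sum_antidiagonal_eq_sum_range_succ_mk, Finset.sum_smul]
  refine Finset.sum_congr rfl fun i hi => ?_
  have hik : i ≤ k := Nat.lt_succ_iff.mp (Finset.mem_range.mp hi)
  rw [smul_mul_smul_comm, ← pow_add]
  congr 2
  omega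

lemma mul_tsum_smul (A : 𝔸) (f g : ℕ → ℂ)
    (hf : Summable fun k => ‖f k • A ^ k‖) (hg : Summable fun k => ‖g k • A ^ k‖) :
    (∑' k : ℕ, f k • A ^ k) * (∑' k : ℕ, g k • A ^ k)
      = ∑' k : ℕ, (∑ i ∈ range (k+1), f i * g (k-i)) • A ^ k := by
  rw [tsum_mul_tsum_eq_tsum_sum_antidiagonal_of_summable_norm hf hg]
  exact tsum_congr fun k => antidiag_smul_eq A f g k

lemma summable_norm_conv (A : 𝔸) (f g : ℕ → ℂ)
    (hf : Summable fun k => ‖f k • A ^ k‖) (hg : Summable fun k => ‖g k • A ^ k‖) :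
    Summable fun k => ‖(∑ i ∈ range (k+1), f i * g (k-i)) • A ^ k‖ := by
  have := summable_norm_sum_mul_antidiagonal_of_summable_norm hf hg
  refine this.congr fun k => ?_
  rw [antidiag_smul_eq A f g k]

end

lemma my_sum_range_add {M : Type*} [AddCommMonoid M] (f : ℕ → M) (m n : ℕ) :
    ∑ i ∈ range (m + n), f i = (∑ i ∈ range m, f i) + ∑ i ∈ range n, f (m + i) := by
  induction n with
  | zero => simp
  | succ n ih =>
      rw [show m + (n+1) = (m+n)+1 from rfl, Finset.sum_range_succ, ih,
        Finset.sum_range_succ, add_assoc]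

lemma my_sum_even_odd {M : Type*} [AddCommMonoid M] (f : ℕ → M) (k : ℕ) :
    ∑ i ∈ range (2 * k + 1), f i
      = (∑ j ∈ range (k+1), f (2*j)) + ∑ j ∈ range k, f (2*j+1) := by
  induction k with
  | zero => simp
  | succ k ih =>
      rw [show 2*(k+1)+1 = (2*k+1)+1+1 from by ring, Finset.sum_range_succ,
        Finset.sum_range_succ, ih, Finset.sum_range_succ (fun j => f (2*j)) (k+1),
        Finset.sum_range_succ (fun j => f (2*j+1)) k,
        show 2*(k+1) = 2*k+1+1 from by ring]
      abel

lemma binom_div (n : ℕ) (α β : ℂ) :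
    (α + β) ^ n / (Nat.factorial n : ℂ)
      = ∑ m ∈ range (n+1), α ^ m * β ^ (n-m) / ((Nat.factorial m : ℂ) * (Nat.factorial (n-m) : ℂ)) := by
  rw [add_pow, Finset.sum_div]
  refine Finset.sum_congr rfl fun m hm => ?_
  have hm' : m ≤ n := Nat.lt_succ_iff.mp (Finset.mem_range.mp hm)
  have h := Nat.choose_mul_factorial_mul_factorial hm'
  have hc : ((n.choose m : ℂ)) * (Nat.factorial m : ℂ) * (Nat.factorial (n-m) : ℂ)
      = (Nat.factorial n : ℂ) := by exact_mod_cast congrArg (Nat.cast (R := ℂ)) h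
  have h1 : (Nat.factorial m : ℂ) ≠ 0 := Nat.cast_ne_zero.2 (Nat.factorial_ne_zero m)
  have h2 : (Nat.factorial (n-m) : ℂ) ≠ 0 := Nat.cast_ne_zero.2 (Nat.factorial_ne_zero _)
  have h3 : (Nat.factorial n : ℂ) ≠ 0 := Nat.cast_ne_zero.2 (Nat.factorial_ne_zero n)
  field_simp
  linear_combination α ^ m * β ^ (n - m) * hc

lemma key_scalar (l : ℕ) (hl : 2 ≤ l) (α β : ℂ) (k : ℕ) :
    (α + β) ^ (l-1) * occ (l-1) (α+β) k =
      (-(α ^ l * β) * ∑ i ∈ range k, occ 1 β i * occ l α (k-1-i)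
        + α ^ (l-1) * ∑ i ∈ range (k+1), occ 0 β i * occ (l-1) α (k-i))
      + ∑ k' ∈ Icc 2 l, (α ^ (l-k') * β ^ (k'-1) / (Nat.factorial (l-k') : ℂ)) * occ (k'-1) β k := by
  obtain ⟨p, rfl⟩ : ∃ p, l = p + 2 := ⟨l - 2, by omega⟩
  rw [show p + 2 - 1 = p + 1 from by omega]
  have hL : (α+β) ^ (p+1) * occ (p+1) (α+β) k
      = (-1:ℂ)^k * ((α+β) ^ (2*k+(p+1)) / (Nat.factorial (2*k+(p+1)) : ℂ)) := by
    rw [occ, pow_add]; ring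
  rw [hL, binom_div (2*k+(p+1)) α β,
    show 2*k+(p+1)+1 = (p+1) + (2*k+1) from by omega,
    my_sum_range_add, my_sum_even_odd, mul_add, mul_add]
  have EqA : ((-1:ℂ))^k * ∑ m ∈ range (p+1),
        α ^ m * β ^ (2*k+(p+1)-m) / ((Nat.factorial m : ℂ) * (Nat.factorial (2*k+(p+1)-m) : ℂ))
      = ∑ k' ∈ Icc 2 (p+2),
        (α ^ (p+2-k') * β ^ (k'-1) / (Nat.factorial (p+2-k') : ℂ)) * occ (k'-1) β k := by
    rw [Finset.mul_sum]
    refine Finset.sum_nbij' (fun m => p+2-m) (fun k' => p+2-k') ?_ ?_ ?_ ?_ ?_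
    · intro m hm; simp only [mem_range] at hm; simp only [mem_Icc]; omega
    · intro m hm; simp only [mem_Icc] at hm; simp only [mem_range]; omega
    · intro m hm; simp only [mem_range] at hm; omega
    · intro m hm; simp only [mem_Icc] at hm; omega
    · intro m hm
      simp only [mem_range] at hm
      rw [show p+2-(p+2-m) = m from by omega, show (p+2-m)-1 = p+1-m from by omega, occ,
        show 2*k+(p+1)-m = 2*k+(p+1-m) from by omega, pow_add]
      ring
  have EqB : ((-1:ℂ))^k * ∑ j ∈ range (k+1),
        α ^ (p+1+2*j) * β ^ (2*k+(p+1)-(p+1+2*j))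
          / ((Nat.factorial (p+1+2*j) : ℂ) * (Nat.factorial (2*k+(p+1)-(p+1+2*j)) : ℂ))
      = α ^ (p+1) * ∑ i ∈ range (k+1), occ 0 β i * occ (p+1) α (k-i) := by
    rw [Finset.mul_sum, Finset.mul_sum]
    refine Finset.sum_nbij' (fun j => k-j) (fun i => k-i) ?_ ?_ ?_ ?_ ?_
    · intro m hm; simp only [mem_range] at hm ⊢; omega
    · intro m hm; simp only [mem_range] at hm ⊢; omega
    · intro m hm; simp only [mem_range] at hm; omega
    · intro m hm; simp only [mem_range] at hm; omega
    · intro j hj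
      simp only [mem_range] at hj
      have hj' : j ≤ k := by omega
      simp only [occ, Nat.add_zero]
      have hsgn : ((-1:ℂ))^k = (-1)^((k-j)+j) := by congr 1; omega
      rw [show k-(k-j) = j from by omega,
        show 2*k+(p+1)-(p+1+2*j) = 2*(k-j) from by omega,
        pow_add α (p+1) (2*j), show p+1+2*j = 2*j+(p+1) from by omega, hsgn, pow_add]
      ring
  have EqC : ((-1:ℂ))^k * ∑ j ∈ range k,
        α ^ (p+1+(2*j+1)) * β ^ (2*k+(p+1)-(p+1+(2*j+1)))
          / ((Nat.factorial (p+1+(2*j+1)) : ℂ) * (Nat.factorial (2*k+(p+1)-(p+1+(2*j+1))) : ℂ))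
      = -(α ^ (p+2) * β) * ∑ i ∈ range k, occ 1 β i * occ (p+2) α (k-1-i) := by
    rw [Finset.mul_sum, Finset.mul_sum]
    refine Finset.sum_nbij' (fun j => k-1-j) (fun i => k-1-i) ?_ ?_ ?_ ?_ ?_
    · intro m hm; simp only [mem_range] at hm ⊢; omega
    · intro m hm; simp only [mem_range] at hm ⊢; omega
    · intro m hm; simp only [mem_range] at hm; omega
    · intro m hm; simp only [mem_range] at hm; omega
    · intro j hj
      simp only [mem_range] at hj
      simp only [occ]
      have hsgn : ((-1:ℂ))^k = -((-1)^(k-1-j) * (-1)^j) := by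
        have h1 : ((-1:ℂ))^k = (-1)^((k-1-j)+j+1) := by congr 1; omega
        rw [h1, pow_succ, pow_add]; ring
      rw [show k-1-(k-1-j) = j from by omega,
        show 2*k+(p+1)-(p+1+(2*j+1)) = 2*(k-1-j)+1 from by omega,
        pow_succ β (2*(k-1-j)),
        show p+1+(2*j+1) = (p+2)+(2*j) from by omega,
        pow_add α (p+2) (2*j), show (p+2)+(2*j) = 2*j+(p+2) from by omega, hsgn]
      ring
  rw [EqA, EqB, EqC]
  ring

/-- the addition formula for `(a+b)^{l-1} φ_{l-1}((a+b)² A)`. -/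
theorem osc_addition_formula_deriv {𝔸 : Type*} [NormedRing 𝔸] [NormedAlgebra ℂ 𝔸]
    [CompleteSpace 𝔸] (A : 𝔸) (l : ℕ) (hl : 2 ≤ l) (a b : ℝ) :
    (((a : ℂ) + b) ^ (l - 1)) • osc (l - 1) ((((a : ℂ) + b) ^ 2) • A) =
      -(((a : ℂ) ^ l * b) •
          (A * osc 1 (((b : ℂ) ^ 2) • A) * osc l (((a : ℂ) ^ 2) • A))) +
        ((a : ℂ) ^ (l - 1)) •
          (osc 0 (((b : ℂ) ^ 2) • A) * osc (l - 1) (((a : ℂ) ^ 2) • A)) +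
        ∑ k ∈ Finset.Icc 2 l,
          ((a : ℂ) ^ (l - k) * (b : ℂ) ^ (k - 1) / (Nat.factorial (l - k) : ℂ)) •
            osc (k - 1) (((b : ℂ) ^ 2) • A) := by
  have hocc : ∀ (m : ℕ) (x : ℂ), Summable fun k => ‖occ m x k • A ^ k‖ :=
    fun m x => summable_norm_occ_smul A m x
  simp only [osc_sq_smul]
  -- abbreviations
  have hconv1 : Summable fun k =>
      (∑ i ∈ range (k+1), occ 1 (b:ℂ) i * occ l (a:ℂ) (k-i)) • A ^ k :=
    (summable_norm_conv A _ _ (hocc 1 b) (hocc l a)).of_norm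
  have hconv1' : Summable fun k =>
      (∑ i ∈ range (k+1), occ 1 (b:ℂ) i * occ l (a:ℂ) (k-i)) • A ^ (k+1) := by
    refine (hconv1.mul_right A).congr fun k => ?_
    rw [smul_mul_assoc, ← pow_succ]
  -- summability of t1
  have hsum1 : Summable fun k =>
      (-((a:ℂ) ^ l * (b:ℂ)) * ∑ i ∈ range k, occ 1 (b:ℂ) i * occ l (a:ℂ) (k-1-i)) • A ^ k := by
    refine (summable_nat_add_iff 1).mp ?_
    refine (hconv1'.const_smul (-((a:ℂ) ^ l * (b:ℂ)))).congr fun k => ?_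
    rw [smul_smul]
    try simp only [Nat.add_sub_cancel]
  have hsum2 : Summable fun k =>
      ((a:ℂ) ^ (l-1) * ∑ i ∈ range (k+1), occ 0 (b:ℂ) i * occ (l-1) (a:ℂ) (k-i)) • A ^ k := by
    refine (((summable_norm_conv A _ _ (hocc 0 b) (hocc (l-1) a)).of_norm).const_smul
      ((a:ℂ) ^ (l-1))).congr fun k => ?_
    rw [smul_smul]
  have hsum3 : Summable fun k =>
      (∑ k' ∈ Icc 2 l, ((a:ℂ) ^ (l-k') * (b:ℂ) ^ (k'-1) / (Nat.factorial (l-k') : ℂ))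
        * occ (k'-1) (b:ℂ) k) • A ^ k := by
    refine Summable.congr (f := fun k => ∑ k' ∈ Icc 2 l,
      (((a:ℂ) ^ (l-k') * (b:ℂ) ^ (k'-1) / (Nat.factorial (l-k') : ℂ)) * occ (k'-1) (b:ℂ) k) • A ^ k)
      ?_ fun k => by rw [Finset.sum_smul]
    refine summable_sum fun k' _ => ?_
    refine (((hocc (k'-1) b).of_norm).const_smul
      (((a:ℂ) ^ (l-k') * (b:ℂ) ^ (k'-1) / (Nat.factorial (l-k') : ℂ)))).congr fun k => ?_
    rw [smul_smul]
  -- Term 1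
  have hT1 : -(((a:ℂ) ^ l * (b:ℂ)) •
        (A * (∑' k : ℕ, occ 1 (b:ℂ) k • A ^ k) * (∑' k : ℕ, occ l (a:ℂ) k • A ^ k)))
      = ∑' k : ℕ, (-((a:ℂ) ^ l * (b:ℂ))
          * ∑ i ∈ range k, occ 1 (b:ℂ) i * occ l (a:ℂ) (k-1-i)) • A ^ k := by
    rw [mul_assoc, mul_tsum_smul A _ _ (hocc 1 b) (hocc l a),
      ← Summable.tsum_mul_left A hconv1]
    have e1 : ∀ k : ℕ, A * ((∑ i ∈ range (k+1), occ 1 (b:ℂ) i * occ l (a:ℂ) (k-i)) • A ^ k)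
        = (∑ i ∈ range (k+1), occ 1 (b:ℂ) i * occ l (a:ℂ) (k-i)) • A ^ (k+1) := fun k => by
      rw [mul_smul_comm, ← pow_succ']
    rw [tsum_congr e1, ← neg_smul, ← Summable.tsum_const_smul _ hconv1']
    rw [Summable.tsum_eq_zero_add hsum1]
    simp only [range_zero, Finset.sum_empty, mul_zero, zero_smul, zero_add]
    refine tsum_congr fun k => ?_
    rw [smul_smul]
    try simp only [Nat.add_sub_cancel]
  -- Term 2
  have hT2 : ((a:ℂ) ^ (l-1)) •
        ((∑' k : ℕ, occ 0 (b:ℂ) k • A ^ k) * (∑' k : ℕ, occ (l-1) (a:ℂ) k • A ^ k))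
      = ∑' k : ℕ, ((a:ℂ) ^ (l-1)
          * ∑ i ∈ range (k+1), occ 0 (b:ℂ) i * occ (l-1) (a:ℂ) (k-i)) • A ^ k := by
    rw [mul_tsum_smul A _ _ (hocc 0 b) (hocc (l-1) a),
      ← Summable.tsum_const_smul _ ((summable_norm_conv A _ _ (hocc 0 b) (hocc (l-1) a)).of_norm)]
    exact tsum_congr fun k => smul_smul _ _ _
  -- Term 3
  have hT3 : (∑ k' ∈ Finset.Icc 2 l,
        ((a:ℂ) ^ (l-k') * (b:ℂ) ^ (k'-1) / (Nat.factorial (l-k') : ℂ)) •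
          (∑' k : ℕ, occ (k'-1) (b:ℂ) k • A ^ k))
      = ∑' k : ℕ, (∑ k' ∈ Icc 2 l,
          ((a:ℂ) ^ (l-k') * (b:ℂ) ^ (k'-1) / (Nat.factorial (l-k') : ℂ))
            * occ (k'-1) (b:ℂ) k) • A ^ k := by
    have step1 : ∀ k' ∈ Finset.Icc 2 l,
        ((a:ℂ) ^ (l-k') * (b:ℂ) ^ (k'-1) / (Nat.factorial (l-k') : ℂ)) •
          (∑' k : ℕ, occ (k'-1) (b:ℂ) k • A ^ k)
        = ∑' k : ℕ, (((a:ℂ) ^ (l-k') * (b:ℂ) ^ (k'-1) / (Nat.factorial (l-k') : ℂ))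
            * occ (k'-1) (b:ℂ) k) • A ^ k := by
      intro k' _
      rw [← Summable.tsum_const_smul _ ((hocc (k'-1) b).of_norm)]
      exact tsum_congr fun k => smul_smul _ _ _
    rw [Finset.sum_congr rfl step1]
    rw [← Summable.tsum_finsetSum (fun k' hk' => by
      refine (((hocc (k'-1) b).of_norm).const_smul
        (((a:ℂ) ^ (l-k') * (b:ℂ) ^ (k'-1) / (Nat.factorial (l-k') : ℂ)))).congr fun k => ?_
      rw [smul_smul])]
    exact tsum_congr fun k => (Finset.sum_smul).symm
  rw [hT1, hT2, hT3, ← Summable.tsum_add hsum1 hsum2, ← Summable.tsum_add (hsum1.add hsum2) hsum3]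
  rw [← Summable.tsum_const_smul _ ((hocc (l-1) ((a:ℂ)+(b:ℂ)))).of_norm]
  refine tsum_congr fun k => ?_
  rw [smul_smul, ← add_smul, ← add_smul]
  exact congrArg (· • A ^ k) (key_scalar l hl (a:ℂ) (b:ℂ) k)
end

section
/- For every element A of a complex Banach algebra and every integer l ≥ 1, the function t ↦ t^l · φ_l(t^2 A) from ℝ to the algebra is differentiable, with derivative at every t equal to t^{l−1} · φ_{l−1}(t^2 A). -/
/-- for `l ≥ 1`, `t ↦ t^l φ_l(t² A)` is differentiable with
derivative `t^{l-1} φ_{l-1}(t² A)`. -/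
theorem osc_pow_hasDerivAt {𝔸 : Type*} [NormedRing 𝔸] [NormedAlgebra ℂ 𝔸]
    [CompleteSpace 𝔸] (A : 𝔸) (l : ℕ) (hl : 1 ≤ l) (t : ℝ) :
    HasDerivAt (fun t : ℝ => ((t : ℂ) ^ l) • osc l (((t : ℂ) ^ 2) • A))
      (((t : ℂ) ^ (l - 1)) • osc (l - 1) (((t : ℂ) ^ 2) • A)) t := by
  obtain ⟨m, rfl⟩ : ∃ m, l = m + 1 := ⟨l - 1, (Nat.succ_pred_eq_of_pos hl).symm⟩
  simp only [Nat.add_sub_cancel]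
  set B : ℕ → 𝔸 := fun k => ((-1 : ℂ) ^ k / ((2 * k + (m + 1)).factorial : ℂ)) • A ^ k with hB
  set g : ℕ → ℝ → 𝔸 := fun k s => s ^ (2 * k + (m + 1)) • B k with hg
  set g' : ℕ → ℝ → 𝔸 :=
    fun k s => (((2 * k + (m + 1) : ℕ) : ℝ) * s ^ (2 * k + m)) • B k with hg'
  have hpow : ∀ (s : ℝ) (k : ℕ), (((s : ℂ) ^ 2) • A) ^ k = ((s : ℂ) ^ (2 * k)) • A ^ k := by
    intro s k
    rw [smul_pow, ← pow_mul]
  -- pointwise identification of the function with the series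
  have claim1 : ∀ s : ℝ, ((s : ℂ) ^ (m + 1)) • osc (m + 1) (((s : ℂ) ^ 2) • A)
      = ∑' k, g k s := by
    intro s
    rw [osc, ← tsum_const_smul'' ((s : ℂ) ^ (m + 1))]
    refine tsum_congr fun k => ?_
    have e : g k s = (((s : ℂ) ^ (2 * k + (m + 1)))
        * ((-1 : ℂ) ^ k / ((2 * k + (m + 1)).factorial : ℂ))) • A ^ k := by
      simp only [hg, hB]
      rw [← Complex.coe_smul, smul_smul]
      congr 1
      push_cast
      ring
    rw [hpow s k, e, smul_smul, smul_smul]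
    congr 1
    ring
  -- pointwise identification of the derivative with the series of derivatives
  have claim2 : ∀ s : ℝ, (∑' k, g' k s)
      = ((s : ℂ) ^ m) • osc m (((s : ℂ) ^ 2) • A) := by
    intro s
    rw [osc, ← tsum_const_smul'' ((s : ℂ) ^ m)]
    refine tsum_congr fun k => ?_
    have hfac : (((2 * k + (m + 1)).factorial : ℂ))
        = ((2 * k + (m + 1) : ℕ) : ℂ) * ((2 * k + m).factorial : ℂ) := by
      rw [show 2 * k + (m + 1) = (2 * k + m) + 1 from rfl, Nat.factorial_succ]
      push_cast; ring
    have hne1 : ((2 * k + (m + 1) : ℕ) : ℂ) ≠ 0 := by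
      exact Nat.cast_ne_zero.mpr (Nat.succ_ne_zero _)
    have hne2 : (((2 * k + m).factorial : ℂ)) ≠ 0 :=
      Nat.cast_ne_zero.mpr (Nat.factorial_ne_zero _)
    have hsc : ((2 * k + (m + 1) : ℕ) : ℂ)
        * ((-1 : ℂ) ^ k / ((2 * k + (m + 1)).factorial : ℂ))
        = (-1 : ℂ) ^ k / ((2 * k + m).factorial : ℂ) := by
      rw [hfac]
      push_cast at hne1 ⊢
      field_simp
    have e : g' k s = ((((2 * k + (m + 1) : ℕ) : ℂ) * (s : ℂ) ^ (2 * k + m))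
        * ((-1 : ℂ) ^ k / ((2 * k + (m + 1)).factorial : ℂ))) • A ^ k := by
      simp only [hg', hB]
      rw [← Complex.coe_smul, smul_smul]
      congr 1
      push_cast
      ring
    rw [hpow s k, e, smul_smul, smul_smul]
    congr 1
    rw [mul_comm (((2 * k + (m + 1) : ℕ) : ℂ)) ((s : ℂ) ^ (2 * k + m)), mul_assoc, hsc]
    ring
  -- set up the series differentiation
  set R : ℝ := |t| + 1 with hR
  have hR1 : (1 : ℝ) ≤ R := by rw [hR]; linarith [abs_nonneg t]
  have hR0 : (0 : ℝ) < R := lt_of_lt_of_le one_pos hR1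
  set u : ℕ → ℝ := fun k =>
    (‖(1 : 𝔸)‖ + 1) * (R ^ (2 * k + m) * ‖A‖ ^ k / ((2 * k + m).factorial : ℝ)) with hu_def
  have hu : Summable u := by
    rw [hu_def]
    apply Summable.mul_left
    refine Summable.of_nonneg_of_le (fun k => by positivity) (fun k => ?_)
      ((Real.summable_pow_div_factorial (R ^ 2 * ‖A‖)).mul_left (R ^ m))
    have h1 : R ^ (2 * k + m) * ‖A‖ ^ k = R ^ m * ((R ^ 2 * ‖A‖) ^ k) := by
      rw [pow_add, pow_mul, mul_pow]; ring
    rw [h1, mul_div_assoc]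
    gcongr
    omega
  have hBnorm : ∀ k, ‖B k‖ ≤ (‖(1 : 𝔸)‖ + 1) * ‖A‖ ^ k / ((2 * k + (m + 1)).factorial : ℝ) := by
    intro k
    rw [hB, norm_smul]
    have hA : ‖A ^ k‖ ≤ (‖(1 : 𝔸)‖ + 1) * ‖A‖ ^ k := by
      rcases Nat.eq_zero_or_pos k with rfl | hk
      · calc ‖A ^ 0‖ = ‖(1 : 𝔸)‖ := by rw [pow_zero]
          _ ≤ (‖(1 : 𝔸)‖ + 1) * ‖A‖ ^ 0 := by rw [pow_zero, mul_one]; linarith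
      · calc ‖A ^ k‖ ≤ ‖A‖ ^ k := norm_pow_le' A hk
          _ ≤ (‖(1 : 𝔸)‖ + 1) * ‖A‖ ^ k := by
            nlinarith [norm_nonneg (1 : 𝔸), pow_nonneg (norm_nonneg A) k]
    have hc : ‖(-1 : ℂ) ^ k / ((2 * k + (m + 1)).factorial : ℂ)‖
        = 1 / ((2 * k + (m + 1)).factorial : ℝ) := by
      simp
    rw [hc, div_mul_eq_mul_div, one_mul]
    gcongr
  have key : HasDerivAt (fun z => ∑' k, g k z) (∑' k, g' k t) t := by
    apply hasDerivAt_tsum_of_isPreconnected hu Metric.isOpen_ball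
      (convex_ball (0 : ℝ) R).isPreconnected
      (g := g) (g' := g') (y₀ := 0)
    · intro k y _
      have := (hasDerivAt_pow (2 * k + (m + 1)) y).smul_const (B k)
      simpa [hg, hg', show 2 * k + (m + 1) - 1 = 2 * k + m by omega] using this
    · intro k y hy
      rw [Metric.mem_ball, Real.dist_eq, sub_zero] at hy
      rw [hg', norm_smul, Real.norm_eq_abs, abs_mul, abs_pow]
      have h1 : |((2 * k + (m + 1) : ℕ) : ℝ)| = ((2 * k + (m + 1) : ℕ) : ℝ) := by
        rw [abs_of_nonneg]; positivity
      have h2 : |y| ^ (2 * k + m) ≤ R ^ (2 * k + m) :=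
        pow_le_pow_left₀ (abs_nonneg y) hy.le _
      calc |((2 * k + (m + 1) : ℕ) : ℝ)| * |y| ^ (2 * k + m) * ‖B k‖
          ≤ ((2 * k + (m + 1) : ℕ) : ℝ) * R ^ (2 * k + m)
            * ((‖(1 : 𝔸)‖ + 1) * ‖A‖ ^ k / ((2 * k + (m + 1)).factorial : ℝ)) := by
            rw [h1]
            exact mul_le_mul (mul_le_mul_of_nonneg_left h2 (by positivity)) (hBnorm k)
              (norm_nonneg _) (by positivity)
        _ = u k := by
            rw [hu_def]
            simp only
            have hfac : ((2 * k + (m + 1)).factorial : ℝ)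
                = ((2 * k + (m + 1) : ℕ) : ℝ) * ((2 * k + m).factorial : ℝ) := by
              rw [show 2 * k + (m + 1) = (2 * k + m) + 1 from rfl, Nat.factorial_succ]
              push_cast; ring
            have hne : ((2 * k + (m + 1) : ℕ) : ℝ) ≠ 0 := by positivity
            have hne2 : ((2 * k + m).factorial : ℝ) ≠ 0 :=
              Nat.cast_ne_zero.mpr (Nat.factorial_ne_zero _)
            rw [hfac]
            field_simp [hfac]
    · exact Metric.mem_ball_self hR0
    · have h0 : ∀ k, g k 0 = 0 := by
        intro k
        rw [hg]
        simp [zero_pow (by omega : 2 * k + (m + 1) ≠ 0)]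
      simpa [h0] using summable_zero
    · rw [Metric.mem_ball, Real.dist_eq, sub_zero, hR]; linarith [abs_nonneg t]
  have e1 : (fun s : ℝ => ((s : ℂ) ^ (m + 1)) • osc (m + 1) (((s : ℂ) ^ 2) • A))
      = fun z => ∑' k, g k z := funext claim1
  rw [e1, ← claim2 t]
  exact key
end

section
/- Let A be an N×N complex matrix, t_0 ∈ ℝ, and y_0, y_0' ∈ ℂ^N. Then the function y(t) = φ_0((t−t_0)^2 A) y_0 + (t−t_0) φ_1((t−t_0)^2 A) y_0' is twice differentiable on ℝ and satisfies y''(t) = −A y(t) for all t, together with y(t_0) = y_0 and y'(t_0) = y_0'; i.e., it solves the homogeneous second-order initial value problem y'' = −A y, y(t_0)=y_0, y'(t_0)=y_0'. -/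
open scoped Nat

attribute [local instance] Matrix.linftyOpNormedRing Matrix.linftyOpNormedAlgebra

noncomputable local instance {N : ℕ} : CompleteSpace (Matrix (Fin N) (Fin N) ℂ) :=
  FiniteDimensional.complete ℂ _

/-- The oscillatory matrix function `φ_l(A) = ∑_{k=0}^∞ (-1)^k A^k / (2k+l)!`. -/
noncomputable def oscM {N : ℕ} (l : ℕ) (A : Matrix (Fin N) (Fin N) ℂ) :
    Matrix (Fin N) (Fin N) ℂ :=
  ∑' k : ℕ, ((-1 : ℂ) ^ k / (Nat.factorial (2 * k + l) : ℂ)) • A ^ k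

section genAux
variable {E : Type*} [NormedAddCommGroup E] [NormedSpace ℝ E] [CompleteSpace E]

lemma mySummable (c : ℕ → E) {C K : ℝ} (hK : 0 ≤ K)
    (hc : ∀ n, ‖c n‖ ≤ C * K ^ n / n !) (s : ℝ) :
    Summable fun n => s ^ n • c n := by
  have hC : 0 ≤ C := by
    have := hc 0; simpa using le_trans (norm_nonneg _) this
  apply Summable.of_norm
  refine Summable.of_nonneg_of_le (fun n => norm_nonneg _) (fun n => ?_)
    (((Real.summable_pow_div_factorial (|s| * K))).mul_left C)
  have : ‖s ^ n • c n‖ = |s| ^ n * ‖c n‖ := by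
    rw [norm_smul, norm_pow, Real.norm_eq_abs]
  rw [this]
  calc |s| ^ n * ‖c n‖ ≤ |s| ^ n * (C * K ^ n / n !) := by
        exact mul_le_mul_of_nonneg_left (hc n) (by positivity)
    _ = C * ((|s| * K) ^ n / n !) := by rw [mul_pow]; ring

set_option maxHeartbeats 1000000 in
lemma myHasDerivAt (c : ℕ → E) {C K : ℝ} (hK : 0 ≤ K)
    (hc : ∀ n, ‖c n‖ ≤ C * K ^ n / n !) (t₀ t : ℝ) :
    HasDerivAt (fun s => ∑' n, (s - t₀) ^ n • c n)
      (∑' n : ℕ, (((n : ℝ) + 1) * (t - t₀) ^ n) • c (n + 1)) t := by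
  have hC : 0 ≤ C := by
    have := hc 0; simpa using le_trans (norm_nonneg _) this
  set R : ℝ := |t - t₀| + 1 with hR
  have hR1 : 1 ≤ R := le_add_of_nonneg_left (abs_nonneg _)
  set u : ℕ → ℝ := fun n => C * ((2 * R * K) ^ n / n !) with hu
  have hus : Summable u := (Real.summable_pow_div_factorial (2 * R * K)).mul_left C
  have hderiv : ∀ (n : ℕ) (s : ℝ),
      HasDerivAt (fun s : ℝ => (s - t₀) ^ n • c n)
        (((n : ℝ) * (s - t₀) ^ (n - 1)) • c n) s := by
    intro n s
    have h1 : HasDerivAt (fun s : ℝ => (s - t₀) ^ n)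
        ((n : ℝ) * (s - t₀) ^ (n - 1)) s := by
      have h0 : HasDerivAt (fun s : ℝ => s - t₀) 1 s :=
        (hasDerivAt_id s).sub_const t₀
      simpa [Function.comp_def] using (hasDerivAt_pow n (s - t₀)).comp s h0
    exact h1.smul_const (c n)
  have hbound : ∀ (n : ℕ) (s : ℝ), s ∈ Metric.ball t₀ R →
      ‖((n : ℝ) * (s - t₀) ^ (n - 1)) • c n‖ ≤ u n := by
    intro n s hs
    have hsR : |s - t₀| ≤ R := le_of_lt (by simpa [Real.dist_eq] using hs)
    have h1 : ‖((n : ℝ) * (s - t₀) ^ (n - 1)) • c n‖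
        ≤ (n : ℝ) * R ^ (n - 1) * ‖c n‖ := by
      rw [norm_smul, Real.norm_eq_abs, abs_mul, abs_pow, Nat.abs_cast]
      gcongr
    refine h1.trans ?_
    have h2 : (n : ℝ) * R ^ (n - 1) ≤ 2 ^ n * R ^ n := by
      have hn2 : (n : ℝ) ≤ 2 ^ n := by
        exact_mod_cast (Nat.lt_two_pow_self (n := n)).le
      have hRp : R ^ (n - 1) ≤ R ^ n :=
        pow_le_pow_right₀ hR1 (Nat.sub_le n 1)
      have hR0 : (0:ℝ) ≤ R ^ (n-1) := by positivity
      exact mul_le_mul hn2 hRp hR0 (by positivity)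
    have h3 : (n : ℝ) * R ^ (n - 1) * ‖c n‖ ≤ 2 ^ n * R ^ n * (C * K ^ n / n !) :=
      mul_le_mul h2 (hc n) (norm_nonneg _) (by positivity)
    refine h3.trans (le_of_eq ?_)
    rw [hu]; simp only [mul_pow]; ring
  have htmem : t ∈ Metric.ball t₀ R := by
    simp only [Metric.mem_ball, Real.dist_eq, hR]
    exact lt_add_one _
  have h0mem : t₀ ∈ Metric.ball t₀ R := Metric.mem_ball_self (by positivity)
  have hsum0 : Summable fun n : ℕ => (t₀ - t₀) ^ n • c n :=
    mySummable c hK hc (t₀ - t₀)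
  have hmain := hasDerivAt_tsum_of_isPreconnected
    (g := fun (n : ℕ) (s : ℝ) => (s - t₀) ^ n • c n)
    (g' := fun (n : ℕ) (s : ℝ) => ((n : ℝ) * (s - t₀) ^ (n - 1)) • c n)
    hus Metric.isOpen_ball (convex_ball t₀ R).isPreconnected
    (fun n s _ => hderiv n s) hbound
    h0mem hsum0 htmem
  have hsum' : Summable fun n : ℕ => ((n : ℝ) * (t - t₀) ^ (n - 1)) • c n := by
    refine Summable.of_norm (Summable.of_nonneg_of_le (fun n => norm_nonneg _)
      (fun n => hbound n t ?_) hus)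
    exact htmem
  have hre : (∑' n : ℕ, ((n : ℝ) * (t - t₀) ^ (n - 1)) • c n)
      = ∑' n : ℕ, (((n : ℝ) + 1) * (t - t₀) ^ n) • c (n + 1) := by
    rw [Summable.tsum_eq_zero_add hsum']
    simp only [Nat.cast_zero, zero_mul, zero_smul, zero_add]
    refine tsum_congr fun n => ?_
    push_cast
    ring_nf
  rw [hre] at hmain
  exact hmain
end genAux

namespace OscAux
variable {N : ℕ}

lemma real_smul_pi (r : ℝ) (v : Fin N → ℂ) : r • v = ((r : ℂ)) • v := by
  funext i
  simp [Complex.real_smul]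

lemma norm_pow_mulVec (A : Matrix (Fin N) (Fin N) ℂ) (v : Fin N → ℂ) (k : ℕ) :
    ‖(A ^ k).mulVec v‖ ≤ ‖A‖ ^ k * ‖v‖ := by
  induction k with
  | zero => simp [Matrix.one_mulVec]
  | succ k ih =>
    rw [pow_succ']
    rw [← Matrix.mulVec_mulVec]
    calc ‖A.mulVec ((A ^ k).mulVec v)‖ ≤ ‖A‖ * ‖(A ^ k).mulVec v‖ :=
          Matrix.linfty_opNorm_mulVec _ _
      _ ≤ ‖A‖ * (‖A‖ ^ k * ‖v‖) := by
          exact mul_le_mul_of_nonneg_left ih (norm_nonneg A)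
      _ = ‖A‖ ^ (k + 1) * ‖v‖ := by ring

lemma norm_pow_le (A : Matrix (Fin N) (Fin N) ℂ) (k : ℕ) :
    ‖A ^ k‖ ≤ max ‖(1 : Matrix (Fin N) (Fin N) ℂ)‖ 1 * ‖A‖ ^ k := by
  induction k with
  | zero => rw [pow_zero, pow_zero, mul_one]; exact le_max_left _ _
  | succ k ih =>
    rw [pow_succ]
    calc ‖A ^ k * A‖ ≤ ‖A ^ k‖ * ‖A‖ := norm_mul_le _ _
      _ ≤ (max ‖(1 : Matrix (Fin N) (Fin N) ℂ)‖ 1 * ‖A‖ ^ k) * ‖A‖ :=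
          mul_le_mul_of_nonneg_right ih (norm_nonneg A)
      _ = max ‖(1 : Matrix (Fin N) (Fin N) ℂ)‖ 1 * ‖A‖ ^ (k + 1) := by ring

lemma summable_oscM (l : ℕ) (B : Matrix (Fin N) (Fin N) ℂ) :
    Summable fun k : ℕ => ((-1 : ℂ) ^ k / (Nat.factorial (2 * k + l) : ℂ)) • B ^ k := by
  set C₁ := max ‖(1 : Matrix (Fin N) (Fin N) ℂ)‖ 1 with hC₁
  apply Summable.of_norm
  refine Summable.of_nonneg_of_le (fun k => norm_nonneg _) (fun k => ?_)
    ((Real.summable_pow_div_factorial ‖B‖).mul_left C₁)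
  rw [norm_smul]
  have h1 : ‖((-1 : ℂ) ^ k / (Nat.factorial (2 * k + l) : ℂ))‖
      = 1 / (Nat.factorial (2 * k + l) : ℝ) := by
    rw [norm_div, norm_pow, norm_neg, norm_one, one_pow]
    simp
  rw [h1]
  have h2 : (1 : ℝ) / (Nat.factorial (2 * k + l)) ≤ 1 / (Nat.factorial k) := by
    apply one_div_le_one_div_of_le
    · exact_mod_cast Nat.factorial_pos k
    · exact_mod_cast Nat.factorial_le (by omega)
  calc (1 / (Nat.factorial (2 * k + l) : ℝ)) * ‖B ^ k‖
      ≤ (1 / (Nat.factorial k : ℝ)) * (C₁ * ‖B‖ ^ k) := by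
        apply mul_le_mul h2 (norm_pow_le B k) (norm_nonneg _) (by positivity)
    _ = C₁ * (‖B‖ ^ k / (Nat.factorial k)) := by ring

/-- mulVec of oscM as a termwise sum. -/
lemma hasSum_oscM_mulVec (l : ℕ) (B : Matrix (Fin N) (Fin N) ℂ) (v : Fin N → ℂ) :
    HasSum (fun k : ℕ => ((-1 : ℂ) ^ k / (Nat.factorial (2 * k + l) : ℂ)) • (B ^ k).mulVec v)
      ((oscM l B).mulVec v) := by
  let L : Matrix (Fin N) (Fin N) ℂ →ₗ[ℂ] (Fin N → ℂ) :=
    { toFun := fun M => M.mulVec v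
      map_add' := fun M M' => Matrix.add_mulVec M M' v
      map_smul' := fun a M => Matrix.smul_mulVec a M v }
  have hL : Continuous L := L.continuous_of_finiteDimensional
  have h := ((summable_oscM l B).hasSum).map L hL
  have he : (fun k : ℕ => L (((-1 : ℂ) ^ k / (Nat.factorial (2 * k + l) : ℂ)) • B ^ k))
      = fun k : ℕ => ((-1 : ℂ) ^ k / (Nat.factorial (2 * k + l) : ℂ)) • (B ^ k).mulVec v := by
    funext k
    simp [L, Matrix.smul_mulVec]
  rw [Function.comp_def, he] at h
  exact h

noncomputable def coeffSeq (A : Matrix (Fin N) (Fin N) ℂ) (y₀ y₀' : Fin N → ℂ) (n : ℕ) :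
    Fin N → ℂ :=
  if Even n then ((-1 : ℂ) ^ (n / 2) / (n ! : ℂ)) • (A ^ (n / 2)).mulVec y₀
  else ((-1 : ℂ) ^ (n / 2) / (n ! : ℂ)) • (A ^ (n / 2)).mulVec y₀'

lemma coeffSeq_even (A : Matrix (Fin N) (Fin N) ℂ) (y₀ y₀' : Fin N → ℂ) (k : ℕ) :
    coeffSeq A y₀ y₀' (2 * k) =
      ((-1 : ℂ) ^ k / ((2 * k)! : ℂ)) • (A ^ k).mulVec y₀ := by
  have h : (2 * k) / 2 = k := by omega
  simp [coeffSeq, h, even_two_mul]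

lemma coeffSeq_odd (A : Matrix (Fin N) (Fin N) ℂ) (y₀ y₀' : Fin N → ℂ) (k : ℕ) :
    coeffSeq A y₀ y₀' (2 * k + 1) =
      ((-1 : ℂ) ^ k / ((2 * k + 1)! : ℂ)) • (A ^ k).mulVec y₀' := by
  have h : (2 * k + 1) / 2 = k := by omega
  have h2 : ¬ Even (2 * k + 1) := by simp [Nat.even_add_one, even_two_mul]
  simp [coeffSeq, h, h2]

lemma coeffSeq_norm (A : Matrix (Fin N) (Fin N) ℂ) (y₀ y₀' : Fin N → ℂ) (n : ℕ) :
    ‖coeffSeq A y₀ y₀' n‖ ≤ (‖y₀‖ + ‖y₀'‖) * (‖A‖ + 1) ^ n / n ! := by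
  set K : ℝ := ‖A‖ + 1 with hKdef
  have hK1 : 1 ≤ K := le_add_of_nonneg_left (norm_nonneg A)
  have hK0 : 0 ≤ K := zero_le_one.trans hK1
  have hAK : ‖A‖ ≤ K ^ 2 := by nlinarith [norm_nonneg A]
  have hsc : ∀ (k m : ℕ), ‖((-1 : ℂ) ^ k / (m ! : ℂ))‖ = 1 / (m ! : ℝ) := by
    intro k m
    rw [norm_div, norm_pow, norm_neg, norm_one, one_pow]
    simp
  rcases Nat.even_or_odd n with ⟨k, hk⟩ | ⟨k, hk⟩
  · have hn : n = 2 * k := by omega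
    subst hn
    rw [coeffSeq_even, norm_smul, hsc]
    have h1 : ‖(A ^ k).mulVec y₀‖ ≤ ‖A‖ ^ k * ‖y₀‖ := norm_pow_mulVec A y₀ k
    have h2 : ‖A‖ ^ k ≤ K ^ (2 * k) := by
      calc ‖A‖ ^ k ≤ (K ^ 2) ^ k := pow_le_pow_left₀ (norm_nonneg A) hAK k
        _ = K ^ (2 * k) := by rw [← pow_mul, mul_comm]
    calc 1 / ((2 * k)! : ℝ) * ‖(A ^ k).mulVec y₀‖
        ≤ 1 / ((2 * k)! : ℝ) * (K ^ (2 * k) * ‖y₀‖) := by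
          apply mul_le_mul_of_nonneg_left _ (by positivity)
          exact h1.trans (mul_le_mul_of_nonneg_right h2 (norm_nonneg _))
      _ ≤ 1 / ((2 * k)! : ℝ) * (K ^ (2 * k) * (‖y₀‖ + ‖y₀'‖)) := by
          apply mul_le_mul_of_nonneg_left _ (by positivity)
          apply mul_le_mul_of_nonneg_left _ (by positivity)
          linarith [norm_nonneg y₀']
      _ = (‖y₀‖ + ‖y₀'‖) * K ^ (2 * k) / (2 * k)! := by ring
  · have hn : n = 2 * k + 1 := by omega
    subst hn
    rw [coeffSeq_odd, norm_smul, hsc]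
    have h1 : ‖(A ^ k).mulVec y₀'‖ ≤ ‖A‖ ^ k * ‖y₀'‖ := norm_pow_mulVec A y₀' k
    have h2 : ‖A‖ ^ k ≤ K ^ (2 * k + 1) := by
      calc ‖A‖ ^ k ≤ (K ^ 2) ^ k := pow_le_pow_left₀ (norm_nonneg A) hAK k
        _ = K ^ (2 * k) := by rw [← pow_mul, mul_comm]
        _ ≤ K ^ (2 * k + 1) := pow_le_pow_right₀ hK1 (by omega)
    calc 1 / ((2 * k + 1)! : ℝ) * ‖(A ^ k).mulVec y₀'‖
        ≤ 1 / ((2 * k + 1)! : ℝ) * (K ^ (2 * k + 1) * ‖y₀'‖) := by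
          apply mul_le_mul_of_nonneg_left _ (by positivity)
          exact h1.trans (mul_le_mul_of_nonneg_right h2 (norm_nonneg _))
      _ ≤ 1 / ((2 * k + 1)! : ℝ) * (K ^ (2 * k + 1) * (‖y₀‖ + ‖y₀'‖)) := by
          apply mul_le_mul_of_nonneg_left _ (by positivity)
          apply mul_le_mul_of_nonneg_left _ (by positivity)
          linarith [norm_nonneg y₀]
      _ = (‖y₀‖ + ‖y₀'‖) * K ^ (2 * k + 1) / (2 * k + 1)! := by ring

end OscAux

namespace OscAux2
open OscAux
variable {N : ℕ}

lemma coeffSeq_rec (A : Matrix (Fin N) (Fin N) ℂ) (y₀ y₀' : Fin N → ℂ) (n : ℕ) :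
    (((n : ℂ) + 1) * ((n : ℂ) + 2)) • coeffSeq A y₀ y₀' (n + 2)
      = -(A.mulVec (coeffSeq A y₀ y₀' n)) := by
  have hA : ∀ (k : ℕ) (v : Fin N → ℂ) (z : ℂ),
      A.mulVec (z • (A ^ k).mulVec v) = z • (A ^ (k + 1)).mulVec v := by
    intro k v z
    rw [Matrix.mulVec_smul, Matrix.mulVec_mulVec, ← pow_succ']
  have hF : ∀ m : ℕ, ((m : ℂ)) ≠ 0 ∨ True := fun m => Or.inr trivial
  rcases Nat.even_or_odd n with ⟨k, hk⟩ | ⟨k, hk⟩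
  · have hn : n = 2 * k := by omega
    subst hn
    have he2 : 2 * k + 2 = 2 * (k + 1) := by ring
    rw [he2, coeffSeq_even, coeffSeq_even, hA, smul_smul, ← neg_smul]
    congr 1
    have hfac : ((2 * (k + 1))! : ℂ)
        = ((2 * k + 2 : ℕ) : ℂ) * (((2 * k + 1 : ℕ) : ℂ) * ((2 * k)! : ℂ)) := by
      have h3 : 2 * (k + 1) = (2 * k + 1) + 1 := by ring
      rw [h3, Nat.factorial_succ, Nat.factorial_succ]
      push_cast
      ring
    have h0 : ((2 * k)! : ℂ) ≠ 0 := Nat.cast_ne_zero.2 (Nat.factorial_ne_zero _)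
    have h1 : (2 * (k : ℂ) + 1) ≠ 0 := by
      have h := Nat.cast_ne_zero (R := ℂ).2 (show 2 * k + 1 ≠ 0 by omega)
      push_cast at h; exact h
    have h2 : (2 * (k : ℂ) + 2) ≠ 0 := by
      have h := Nat.cast_ne_zero (R := ℂ).2 (show 2 * k + 2 ≠ 0 by omega)
      push_cast at h; exact h
    rw [hfac, pow_succ]
    push_cast
    field_simp
  · have hn : n = 2 * k + 1 := by omega
    subst hn
    have he2 : 2 * k + 1 + 2 = 2 * (k + 1) + 1 := by ring
    rw [he2, coeffSeq_odd, coeffSeq_odd, hA, smul_smul, ← neg_smul]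
    congr 1
    have hfac : ((2 * (k + 1) + 1)! : ℂ)
        = ((2 * k + 3 : ℕ) : ℂ) * (((2 * k + 2 : ℕ) : ℂ) * ((2 * k + 1)! : ℂ)) := by
      have h3 : 2 * (k + 1) + 1 = (2 * k + 2) + 1 := by ring
      have h4 : 2 * k + 2 = (2 * k + 1) + 1 := by ring
      rw [h3, Nat.factorial_succ, h4, Nat.factorial_succ]
      push_cast
      ring
    have h0 : ((2 * k + 1)! : ℂ) ≠ 0 := Nat.cast_ne_zero.2 (Nat.factorial_ne_zero _)
    have h1 : (2 * (k : ℂ) + 2) ≠ 0 := by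
      have h := Nat.cast_ne_zero (R := ℂ).2 (show 2 * k + 2 ≠ 0 by omega)
      push_cast at h; exact h
    have h2 : (2 * (k : ℂ) + 3) ≠ 0 := by
      have h := Nat.cast_ne_zero (R := ℂ).2 (show 2 * k + 3 ≠ 0 by omega)
      push_cast at h; exact h
    rw [hfac, pow_succ]
    push_cast
    field_simp
    ring

lemma coeffSeq_zero (A : Matrix (Fin N) (Fin N) ℂ) (y₀ y₀' : Fin N → ℂ) :
    coeffSeq A y₀ y₀' 0 = y₀ := by
  simp [coeffSeq, Matrix.one_mulVec]

lemma coeffSeq_one (A : Matrix (Fin N) (Fin N) ℂ) (y₀ y₀' : Fin N → ℂ) :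
    coeffSeq A y₀ y₀' 1 = y₀' := by
  have h := coeffSeq_odd A y₀ y₀' 0
  simpa [Matrix.one_mulVec] using h

end OscAux2

set_option maxHeartbeats 1000000 in
/-- `y(t) = φ_0((t-t₀)² A) y₀ + (t-t₀) φ_1((t-t₀)² A) y₀'` solves the
homogeneous second-order IVP `y'' = -A y`, `y(t₀) = y₀`, `y'(t₀) = y₀'`. -/
theorem oscM_solves_homogeneous_ivp {N : ℕ} (A : Matrix (Fin N) (Fin N) ℂ)
    (t₀ : ℝ) (y₀ y₀' : Fin N → ℂ) :
    let y : ℝ → (Fin N → ℂ) := fun t =>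
      (oscM 0 ((((t - t₀ : ℝ) : ℂ)) ^ 2 • A)).mulVec y₀ +
        ((t - t₀ : ℝ) : ℂ) • (oscM 1 ((((t - t₀ : ℝ) : ℂ)) ^ 2 • A)).mulVec y₀'
    (∀ t, DifferentiableAt ℝ y t) ∧ (∀ t, DifferentiableAt ℝ (deriv y) t) ∧
      (∀ t, deriv (deriv y) t = -(A.mulVec (y t))) ∧
      y t₀ = y₀ ∧ deriv y t₀ = y₀' := by
  intro y
  classical
  set c : ℕ → (Fin N → ℂ) := OscAux.coeffSeq A y₀ y₀' with hcdef
  set K : ℝ := ‖A‖ + 1 with hKdef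
  have hK : (0:ℝ) ≤ K := by positivity
  have hc : ∀ n, ‖c n‖ ≤ (‖y₀‖ + ‖y₀'‖) * K ^ n / n ! := fun n =>
    OscAux.coeffSeq_norm A y₀ y₀' n
  -- series representation of y
  have hyt : ∀ t : ℝ, HasSum (fun n : ℕ => (t - t₀) ^ n • c n) (y t) := by
    intro t
    have heven := OscAux.hasSum_oscM_mulVec 0 ((((t - t₀ : ℝ) : ℂ)) ^ 2 • A) y₀
    have hodd := (OscAux.hasSum_oscM_mulVec 1 ((((t - t₀ : ℝ) : ℂ)) ^ 2 • A)
      y₀').const_smul (((t - t₀ : ℝ) : ℂ))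
    have heq1 : (fun k : ℕ => ((-1 : ℂ) ^ k / ((2 * k + 0)! : ℂ)) •
          ((((((t - t₀ : ℝ) : ℂ)) ^ 2 • A)) ^ k).mulVec y₀)
        = fun k : ℕ => (t - t₀) ^ (2 * k) • c (2 * k) := by
      funext k
      rw [hcdef, OscAux.coeffSeq_even, OscAux.real_smul_pi]
      rw [smul_pow, ← pow_mul, Matrix.smul_mulVec, smul_comm, smul_smul, smul_smul]
      congr 1
      push_cast
      ring
    have heq2 : (fun k : ℕ => (((t - t₀ : ℝ) : ℂ)) • (((-1 : ℂ) ^ k / ((2 * k + 1)! : ℂ)) •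
          ((((((t - t₀ : ℝ) : ℂ)) ^ 2 • A)) ^ k).mulVec y₀'))
        = fun k : ℕ => (t - t₀) ^ (2 * k + 1) • c (2 * k + 1) := by
      funext k
      rw [hcdef, OscAux.coeffSeq_odd, OscAux.real_smul_pi]
      rw [smul_pow, ← pow_mul, Matrix.smul_mulVec, smul_comm ((-1 : ℂ) ^ k / _),
        smul_smul, smul_smul, smul_smul]
      congr 1
      push_cast
      ring
    rw [heq1] at heven
    rw [heq2] at hodd
    exact HasSum.even_add_odd (f := fun n : ℕ => (t - t₀) ^ n • c n) heven hodd
  have hyF : y = fun t => ∑' n : ℕ, (t - t₀) ^ n • c n :=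
    funext fun t => ((hyt t).tsum_eq).symm
  set c' : ℕ → (Fin N → ℂ) := fun n => ((n : ℝ) + 1) • c (n + 1) with hc'def
  have hc' : ∀ n, ‖c' n‖ ≤ ((‖y₀‖ + ‖y₀'‖) * K) * K ^ n / n ! := by
    intro n
    rw [hc'def]
    simp only
    rw [norm_smul, Real.norm_eq_abs, abs_of_nonneg (by positivity)]
    calc ((n:ℝ)+1) * ‖c (n+1)‖
        ≤ ((n:ℝ)+1) * ((‖y₀‖ + ‖y₀'‖) * K ^ (n+1) / (n+1)!) :=
          mul_le_mul_of_nonneg_left (hc (n+1)) (by positivity)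
      _ = ((‖y₀‖ + ‖y₀'‖) * K) * K ^ n / n ! := by
          rw [Nat.factorial_succ]
          have hnf : ((n ! : ℕ) : ℝ) ≠ 0 := Nat.cast_ne_zero.2 (Nat.factorial_ne_zero _)
          have hn1 : ((n:ℝ)+1) ≠ 0 := by positivity
          push_cast
          field_simp
          ring
  have hd1 : ∀ t, HasDerivAt (fun s => ∑' n : ℕ, (s - t₀) ^ n • c n)
      (∑' n : ℕ, (t - t₀) ^ n • c' n) t := by
    intro t
    have h := myHasDerivAt c hK hc t₀ t
    have he : (∑' n : ℕ, (((n : ℝ) + 1) * (t - t₀) ^ n) • c (n + 1))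
        = ∑' n : ℕ, (t - t₀) ^ n • c' n := by
      refine tsum_congr fun n => ?_
      rw [hc'def]
      simp only
      rw [smul_smul, mul_comm]
    rwa [he] at h
  have hd2 : ∀ t, HasDerivAt (fun s => ∑' n : ℕ, (s - t₀) ^ n • c' n)
      (∑' n : ℕ, (((n:ℝ)+1) * (t - t₀) ^ n) • c' (n + 1)) t :=
    fun t => myHasDerivAt c' hK hc' t₀ t
  have hderivy : deriv y = fun t => ∑' n : ℕ, (t - t₀) ^ n • c' n := by
    funext t
    rw [hyF]
    exact (hd1 t).deriv
  have hH : ∀ t, (∑' n : ℕ, (((n:ℝ)+1) * (t - t₀) ^ n) • c' (n + 1))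
      = -(A.mulVec (y t)) := by
    intro t
    have hterm : ∀ n : ℕ, (((n:ℝ)+1) * (t - t₀) ^ n) • c' (n + 1)
        = -((t - t₀) ^ n • A.mulVec (c n)) := by
      intro n
      rw [hc'def]
      simp only
      rw [smul_smul]
      have hs : ((n:ℝ)+1) * (t - t₀) ^ n * (((n+1:ℕ):ℝ) + 1)
          = (t - t₀) ^ n * (((n:ℝ)+1) * ((n:ℝ)+2)) := by push_cast; ring
      rw [hs, ← smul_smul]
      have hrec : (((n:ℝ)+1) * ((n:ℝ)+2)) • c (n+2) = -(A.mulVec (c n)) := by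
        rw [OscAux.real_smul_pi]
        have hcast : (((((n:ℝ)+1) * ((n:ℝ)+2)) : ℝ) : ℂ) = ((n:ℂ)+1) * ((n:ℂ)+2) := by
          push_cast; ring
        rw [hcast, hcdef]
        exact OscAux2.coeffSeq_rec A y₀ y₀' n
      rw [hrec, smul_neg]
    rw [tsum_congr hterm, tsum_neg]
    congr 1
    have hmul : HasSum (fun n : ℕ => (t - t₀) ^ n • A.mulVec (c n)) (A.mulVec (y t)) := by
      let L : (Fin N → ℂ) →ₗ[ℂ] (Fin N → ℂ) := Matrix.mulVecLin A
      have hL : Continuous L := L.continuous_of_finiteDimensional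
      have h := (hyt t).map L hL
      have he : (fun n : ℕ => L ((t - t₀) ^ n • c n))
          = fun n : ℕ => (t - t₀) ^ n • A.mulVec (c n) := by
        funext n
        rw [OscAux.real_smul_pi, OscAux.real_smul_pi]
        simp [L, Matrix.mulVec_smul]
      rw [Function.comp_def, he] at h
      simpa [L] using h
    exact hmul.tsum_eq
  refine ⟨?_, ?_, ?_, ?_, ?_⟩
  · intro t
    rw [hyF]
    exact (hd1 t).differentiableAt
  · intro t
    rw [hderivy]
    exact (hd2 t).differentiableAt
  · intro t
    rw [hderivy]
    rw [(hd2 t).deriv]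
    exact hH t
  · have : y t₀ = ∑' n : ℕ, ((t₀ - t₀ : ℝ)) ^ n • c n := congrFun hyF t₀
    rw [this, tsum_eq_single 0 (fun n hn => by rw [sub_self, zero_pow hn, zero_smul])]
    rw [hcdef]
    simp [OscAux2.coeffSeq_zero]
  · have : deriv y t₀ = ∑' n : ℕ, ((t₀ - t₀ : ℝ)) ^ n • c' n := congrFun hderivy t₀
    rw [this, tsum_eq_single 0 (fun n hn => by rw [sub_self, zero_pow hn, zero_smul])]
    rw [hc'def]
    simp only [pow_zero, one_smul, Nat.cast_zero, zero_add]
    rw [hcdef]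
    simp [OscAux2.coeffSeq_one]
end

section
/- Let A be an N×N complex matrix, u ∈ ℂ^N, and l ≥ 2 an integer. Then the function y(t) = t^l · φ_l(t^2 A) u is twice differentiable on ℝ and satisfies y''(t) + A y(t) = (t^{l−2}/(l−2)!) u for all t, together with y(0) = 0 and y'(0) = 0; i.e., it solves the initial value problem y'' + A y = t^{l−2} u/(l−2)!, y(0)=0, y'(0)=0. -/
attribute [local instance] Matrix.linftyOpNormedRing Matrix.linftyOpNormedAlgebra

/-- summability of majorant -/
lemma key_summable (B R C : ℝ) (hB : 0 ≤ B) (hR : 0 ≤ R) (hC : 0 ≤ C) (M : ℕ) :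
    Summable (fun k : ℕ => C * (B ^ k * R ^ (2 * k + M) / (Nat.factorial (2 * k + M) : ℝ))) := by
  refine Summable.of_nonneg_of_le (fun k => by positivity) (fun k => ?_)
    (((Real.summable_pow_div_factorial (B * R ^ 2)).mul_left (C * R ^ M)))
  · have h1 : (Nat.factorial k : ℝ) ≤ (Nat.factorial (2 * k + M) : ℝ) := by
      exact_mod_cast Nat.factorial_le (by omega)
    have h2 : R ^ (2 * k + M) = R ^ M * (R ^ 2) ^ k := by ring
    have h0 : (0:ℝ) < (Nat.factorial k : ℝ) := by positivity
    calc C * (B ^ k * R ^ (2*k+M) / (Nat.factorial (2*k+M) : ℝ))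
        = (C * R ^ M * (B ^ k * (R ^ 2) ^ k)) / (Nat.factorial (2*k+M) : ℝ) := by rw [h2]; ring
      _ ≤ (C * R ^ M * (B ^ k * (R ^ 2) ^ k)) / (Nat.factorial k : ℝ) := by
          apply div_le_div_of_nonneg_left _ h0 h1
          positivity
      _ = C * R ^ M * ((B * R ^ 2) ^ k / (Nat.factorial k : ℝ)) := by rw [mul_pow]; ring

lemma norm_mulVec_pow_le {N : ℕ} (A : Matrix (Fin N) (Fin N) ℂ) (u : Fin N → ℂ) (k : ℕ) :
    ‖(A ^ k).mulVec u‖ ≤ ‖A‖ ^ k * ‖u‖ := by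
  induction k with
  | zero => simp [Matrix.one_mulVec]
  | succ k ih =>
    have : (A ^ (k + 1)).mulVec u = A.mulVec ((A ^ k).mulVec u) := by
      rw [pow_succ']
      rw [← Matrix.mulVec_mulVec]
    rw [this]
    calc ‖A.mulVec ((A ^ k).mulVec u)‖ ≤ ‖A‖ * ‖(A ^ k).mulVec u‖ :=
          Matrix.linfty_opNorm_mulVec _ _
      _ ≤ ‖A‖ * (‖A‖ ^ k * ‖u‖) := by
          exact mul_le_mul_of_nonneg_left ih (norm_nonneg _)
      _ = ‖A‖ ^ (k + 1) * ‖u‖ := by ring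

lemma summable_monomial {N : ℕ} (a : ℕ → Fin N → ℂ) (C B : ℝ) (M : ℕ)
    (hC : 0 ≤ C) (hB : 0 ≤ B)
    (ha : ∀ k, ‖a k‖ ≤ C * B ^ k / (Nat.factorial (2 * k + M) : ℝ)) (t : ℝ) :
    Summable (fun k : ℕ => ((t : ℂ) ^ (2 * k + M)) • a k) := by
  apply Summable.of_norm
  refine Summable.of_nonneg_of_le (fun k => norm_nonneg _) (fun k => ?_)
    (key_summable B |t| C hB (abs_nonneg t) hC M)
  rw [norm_smul]
  have h1 : ‖(t : ℂ) ^ (2 * k + M)‖ = |t| ^ (2 * k + M) := by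
    rw [norm_pow, Complex.norm_real, Real.norm_eq_abs]
  rw [h1]
  calc |t| ^ (2 * k + M) * ‖a k‖ ≤ |t| ^ (2 * k + M) * (C * B ^ k / (Nat.factorial (2 * k + M) : ℝ)) :=
        mul_le_mul_of_nonneg_left (ha k) (by positivity)
    _ = C * (B ^ k * |t| ^ (2 * k + M) / (Nat.factorial (2 * k + M) : ℝ)) := by ring

lemma hasDerivAt_monomial {N : ℕ} (v : Fin N → ℂ) (n : ℕ) (t : ℝ) :
    HasDerivAt (fun s : ℝ => ((s : ℂ) ^ (n + 1)) • v)
      ((((n : ℂ) + 1) * (t : ℂ) ^ n) • v) t := by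
  have h := (hasDerivAt_pow (n + 1) ((t : ℝ) : ℂ)).comp_ofReal
  simpa using h.smul_const v

lemma hasDerivAt_tsum_monomial {N : ℕ} (a : ℕ → Fin N → ℂ) (C B : ℝ)
    (hC : 0 ≤ C) (hB : 0 ≤ B) (M : ℕ)
    (ha : ∀ k, ‖a k‖ ≤ C * B ^ k / (Nat.factorial (2 * k + M + 1) : ℝ)) (t : ℝ) :
    HasDerivAt (fun s : ℝ => ∑' k, ((s : ℂ) ^ (2 * k + M + 1)) • a k)
      (∑' k, ((((2 * k + M : ℕ) : ℂ) + 1) * (t : ℂ) ^ (2 * k + M)) • a k) t := by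
  set R : ℝ := |t| + 1 with hR
  have hR0 : 0 ≤ R := by positivity
  apply hasDerivAt_tsum_of_isPreconnected
    (u := fun k => C * (B ^ k * R ^ (2 * k + M) / (Nat.factorial (2 * k + M) : ℝ)))
    (key_summable B R C hB hR0 hC M)
    (Metric.isOpen_ball (x := (0:ℝ)) (ε := R))
    ((convex_ball (0:ℝ) R).isPreconnected)
    (fun k y _ => hasDerivAt_monomial (a k) (2 * k + M) y)
    (fun k y hy => ?_)
    (y₀ := t) (by simp [hR, Real.dist_eq, abs_lt])
    (summable_monomial a C B (M + 1) hC hB (fun k => ha k) t)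
    (by simp [hR, Real.dist_eq, abs_lt])
  -- the bound
  have hyR : |y| ≤ R := by
    have := hy
    simp [Metric.mem_ball, Real.dist_eq] at this
    linarith [le_abs_self y, neg_abs_le y, abs_nonneg y]
  rw [norm_smul, norm_mul]
  have h1 : ‖((2 * k + M : ℕ) : ℂ) + 1‖ = ((2 * k + M : ℕ) : ℝ) + 1 := by
    have : (((2 * k + M : ℕ) : ℂ) + 1) = (((2 * k + M + 1 : ℕ) : ℝ) : ℂ) := by push_cast; ring
    rw [this, Complex.norm_real, Real.norm_eq_abs, abs_of_nonneg (by positivity)]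
    push_cast; ring
  have h2 : ‖(y : ℂ) ^ (2 * k + M)‖ = |y| ^ (2 * k + M) := by
    rw [norm_pow, Complex.norm_real, Real.norm_eq_abs]
  rw [h1, h2]
  have hfac : (Nat.factorial (2 * k + M + 1) : ℝ) =
      ((2 * k + M : ℕ) + 1 : ℝ) * (Nat.factorial (2 * k + M) : ℝ) := by
    rw [Nat.factorial_succ]; push_cast; ring
  calc (((2 * k + M : ℕ) : ℝ) + 1) * |y| ^ (2 * k + M) * ‖a k‖
      ≤ (((2 * k + M : ℕ) : ℝ) + 1) * R ^ (2 * k + M) *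
          (C * B ^ k / (Nat.factorial (2 * k + M + 1) : ℝ)) := by
        apply mul_le_mul
        · apply mul_le_mul_of_nonneg_left (pow_le_pow_left₀ (abs_nonneg y) hyR _) (by positivity)
        · exact ha k
        · exact norm_nonneg _
        · positivity
    _ = C * (B ^ k * R ^ (2 * k + M) / (Nat.factorial (2 * k + M) : ℝ)) := by
        rw [hfac]
        have : ((2 * k + M : ℕ) : ℝ) + 1 ≠ 0 := by positivity
        field_simp

/-- `mulVec` by a fixed vector, as a continuous linear map in the matrix. -/
noncomputable def mulVecCLM {N : ℕ} (u : Fin N → ℂ) :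
    Matrix (Fin N) (Fin N) ℂ →L[ℂ] (Fin N → ℂ) :=
  LinearMap.toContinuousLinearMap
    { toFun := fun M => M.mulVec u
      map_add' := fun M M' => Matrix.add_mulVec M M' u
      map_smul' := fun c M => Matrix.smul_mulVec c M u }

@[simp] lemma mulVecCLM_apply {N : ℕ} (u : Fin N → ℂ) (M : Matrix (Fin N) (Fin N) ℂ) :
    mulVecCLM u M = M.mulVec u := rfl

/-- The general monomial series. -/
noncomputable def mA {N : ℕ} (A : Matrix (Fin N) (Fin N) ℂ) (u : Fin N → ℂ)
    (M : ℕ) (c : ℕ → ℂ) (t : ℝ) : Fin N → ℂ :=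
  ∑' k : ℕ, (((t : ℂ)) ^ (2 * k + M) * c k) • (A ^ k).mulVec u

lemma mA_eq_tsum_smul {N : ℕ} (A : Matrix (Fin N) (Fin N) ℂ) (u : Fin N → ℂ)
    (M : ℕ) (c : ℕ → ℂ) (t : ℝ) :
    mA A u M c t = ∑' k : ℕ, ((t : ℂ) ^ (2 * k + M)) • (c k • (A ^ k).mulVec u) := by
  unfold mA
  exact tsum_congr fun k => (mul_smul _ _ _)

lemma norm_c_mulVec_le {N : ℕ} (A : Matrix (Fin N) (Fin N) ℂ) (u : Fin N → ℂ)
    (M : ℕ) (c : ℕ → ℂ) (D : ℝ)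
    (hc : ∀ k, ‖c k‖ ≤ D / (Nat.factorial (2 * k + M) : ℝ)) (k : ℕ) :
    ‖c k • (A ^ k).mulVec u‖ ≤ (D * ‖u‖) * ‖A‖ ^ k / (Nat.factorial (2 * k + M) : ℝ) := by
  rw [norm_smul]
  calc ‖c k‖ * ‖(A ^ k).mulVec u‖
      ≤ (D / (Nat.factorial (2 * k + M) : ℝ)) * (‖A‖ ^ k * ‖u‖) := by
        apply mul_le_mul (hc k) (norm_mulVec_pow_le A u k) (norm_nonneg _)
        exact le_trans (norm_nonneg _) (hc k)
    _ = (D * ‖u‖) * ‖A‖ ^ k / (Nat.factorial (2 * k + M) : ℝ) := by ring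

lemma mA_summable {N : ℕ} (A : Matrix (Fin N) (Fin N) ℂ) (u : Fin N → ℂ)
    (M : ℕ) (c : ℕ → ℂ) (D : ℝ) (hD : 0 ≤ D)
    (hc : ∀ k, ‖c k‖ ≤ D / (Nat.factorial (2 * k + M) : ℝ)) (t : ℝ) :
    Summable (fun k : ℕ => (((t : ℂ)) ^ (2 * k + M) * c k) • (A ^ k).mulVec u) := by
  have : (fun k : ℕ => (((t : ℂ)) ^ (2 * k + M) * c k) • (A ^ k).mulVec u)
      = fun k : ℕ => ((t : ℂ) ^ (2 * k + M)) • (c k • (A ^ k).mulVec u) := by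
    funext k; exact mul_smul _ _ _
  rw [this]
  exact summable_monomial _ (D * ‖u‖) ‖A‖ M (by positivity) (norm_nonneg A)
    (norm_c_mulVec_le A u M c D hc) t

lemma mA_hasDerivAt {N : ℕ} (A : Matrix (Fin N) (Fin N) ℂ) (u : Fin N → ℂ)
    (M : ℕ) (c : ℕ → ℂ) (D : ℝ) (hD : 0 ≤ D)
    (hc : ∀ k, ‖c k‖ ≤ D / (Nat.factorial (2 * k + (M + 1)) : ℝ)) (t : ℝ) :
    HasDerivAt (fun s : ℝ => mA A u (M + 1) c s)
      (mA A u M (fun k => (((2 * k + M : ℕ) : ℂ) + 1) * c k) t) t := by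
  have h := hasDerivAt_tsum_monomial (fun k => c k • (A ^ k).mulVec u) (D * ‖u‖) ‖A‖
    (by positivity) (norm_nonneg A) M (norm_c_mulVec_le A u (M + 1) c D hc) t
  have e1 : (fun s : ℝ => ∑' k : ℕ, ((s : ℂ) ^ (2 * k + M + 1)) • (c k • (A ^ k).mulVec u))
      = fun s : ℝ => mA A u (M + 1) c s := by
    funext s
    rw [mA_eq_tsum_smul]
    exact tsum_congr fun k => by norm_num [add_assoc]
  have e2 : (∑' k : ℕ, ((((2 * k + M : ℕ) : ℂ) + 1) * (t : ℂ) ^ (2 * k + M)) •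
        (c k • (A ^ k).mulVec u))
      = mA A u M (fun k => (((2 * k + M : ℕ) : ℂ) + 1) * c k) t := by
    unfold mA
    apply tsum_congr fun k => ?_
    rw [smul_smul]
    congr 1
    ring
  rw [e1, e2] at h
  exact h

lemma norm_matrix_pow_le {N : ℕ} (B : Matrix (Fin N) (Fin N) ℂ) (k : ℕ) :
    ‖B ^ k‖ ≤ max ‖(1 : Matrix (Fin N) (Fin N) ℂ)‖ 1 * ‖B‖ ^ k := by
  cases k with
  | zero => rw [pow_zero, pow_zero, mul_one]; exact le_max_left _ _
  | succ k =>
    calc ‖B ^ (k + 1)‖ ≤ ‖B‖ ^ (k + 1) := norm_pow_le' B k.succ_pos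
      _ ≤ max ‖(1 : Matrix (Fin N) (Fin N) ℂ)‖ 1 * ‖B‖ ^ (k + 1) :=
        le_mul_of_one_le_left (by positivity) (le_max_right _ _)

lemma oscM_series_summable {N : ℕ} (B : Matrix (Fin N) (Fin N) ℂ) (M : ℕ) :
    Summable (fun k : ℕ => ((-1 : ℂ) ^ k / (Nat.factorial (2 * k + M) : ℂ)) • B ^ k) := by
  apply Summable.of_norm
  refine Summable.of_nonneg_of_le (fun k => norm_nonneg _) (fun k => ?_)
    (key_summable ‖B‖ 1 (max ‖(1 : Matrix (Fin N) (Fin N) ℂ)‖ 1) (norm_nonneg B)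
      zero_le_one (le_trans zero_le_one (le_max_right _ _)) M)
  rw [norm_smul]
  have hc : ‖(-1 : ℂ) ^ k / (Nat.factorial (2 * k + M) : ℂ)‖
      = 1 / (Nat.factorial (2 * k + M) : ℝ) := by
    rw [norm_div, norm_pow, norm_neg, norm_one, one_pow]
    congr 1
    simp [Complex.norm_natCast]
  rw [hc, one_pow]
  calc 1 / (Nat.factorial (2 * k + M) : ℝ) * ‖B ^ k‖
      ≤ 1 / (Nat.factorial (2 * k + M) : ℝ) *
        (max ‖(1 : Matrix (Fin N) (Fin N) ℂ)‖ 1 * ‖B‖ ^ k) := by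
        exact mul_le_mul_of_nonneg_left (norm_matrix_pow_le B k) (by positivity)
    _ = max ‖(1 : Matrix (Fin N) (Fin N) ℂ)‖ 1 *
        (‖B‖ ^ k * 1 / (Nat.factorial (2 * k + M) : ℝ)) := by ring

lemma oscM_mulVec_eq_mA {N : ℕ} (A : Matrix (Fin N) (Fin N) ℂ) (u : Fin N → ℂ)
    (M : ℕ) (t : ℝ) :
    ((t : ℂ) ^ M) • (oscM M (((t : ℂ) ^ 2) • A)).mulVec u
      = mA A u M (fun k => (-1 : ℂ) ^ k / (Nat.factorial (2 * k + M) : ℂ)) t := by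
  unfold oscM
  rw [← mulVecCLM_apply u, (mulVecCLM u).map_tsum (oscM_series_summable _ M),
    ← tsum_const_smul'' ((t : ℂ) ^ M)]
  unfold mA
  apply tsum_congr fun k => ?_
  simp only [mulVecCLM_apply, smul_pow, Matrix.smul_mulVec, smul_smul]
  congr 1
  ring

noncomputable def cQ (M : ℕ) : ℕ → ℂ := fun k => (-1 : ℂ) ^ k / (Nat.factorial (2 * k + M) : ℂ)

lemma norm_cQ (M k : ℕ) : ‖cQ M k‖ = 1 / (Nat.factorial (2 * k + M) : ℝ) := by
  unfold cQ
  rw [norm_div, norm_pow, norm_neg, norm_one, one_pow]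
  congr 1
  simp [Complex.norm_natCast]

lemma norm_natCast_add_one (n : ℕ) : ‖((n : ℂ) + 1)‖ = (n : ℝ) + 1 := by
  have : ((n : ℂ) + 1) = ((n + 1 : ℕ) : ℂ) := by push_cast; ring
  rw [this, Complex.norm_natCast]
  push_cast; ring

lemma norm_step (M : ℕ) (c : ℕ → ℂ) (D : ℝ)
    (hc : ∀ k, ‖c k‖ ≤ D / (Nat.factorial (2 * k + (M + 1)) : ℝ)) (k : ℕ) :
    ‖(((2 * k + M : ℕ) : ℂ) + 1) * c k‖ ≤ D / (Nat.factorial (2 * k + M) : ℝ) := by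
  rw [norm_mul, norm_natCast_add_one]
  have h1 : (2 * k + (M + 1)) = (2 * k + M) + 1 := rfl
  have h2 : (Nat.factorial (2 * k + (M + 1)) : ℝ)
      = (((2 * k + M : ℕ) : ℝ) + 1) * (Nat.factorial (2 * k + M) : ℝ) := by
    rw [h1, Nat.factorial_succ]; push_cast; ring
  calc (((2 * k + M : ℕ) : ℝ) + 1) * ‖c k‖
      ≤ (((2 * k + M : ℕ) : ℝ) + 1) * (D / (Nat.factorial (2 * k + (M + 1)) : ℝ)) :=
        mul_le_mul_of_nonneg_left (hc k) (by positivity)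
    _ = D / (Nat.factorial (2 * k + M) : ℝ) := by
        rw [h2]
        have : (((2 * k + M : ℕ) : ℝ) + 1) ≠ 0 := by positivity
        field_simp

lemma norm_cQ_le (M k : ℕ) : ‖cQ M k‖ ≤ 1 / (Nat.factorial (2 * k + M) : ℝ) :=
  le_of_eq (norm_cQ M k)

/-- `A.mulVec` as a continuous linear map. -/
noncomputable def mulVecL {N : ℕ} (A : Matrix (Fin N) (Fin N) ℂ) :
    (Fin N → ℂ) →L[ℂ] (Fin N → ℂ) :=
  LinearMap.toContinuousLinearMap A.mulVecLin

@[simp] lemma mulVecL_apply {N : ℕ} (A : Matrix (Fin N) (Fin N) ℂ) (v : Fin N → ℂ) :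
    mulVecL A v = A.mulVec v := rfl

lemma coeff_collapse (n k : ℕ) :
    (((n : ℕ) : ℂ) + 1) * (((((n : ℕ) + 1 : ℕ) : ℂ) + 1) * ((-1 : ℂ) ^ k / ((Nat.factorial (n + 2)) : ℂ)))
      = (-1 : ℂ) ^ k / ((Nat.factorial n : ℂ)) := by
  rw [show n + 2 = (n + 1) + 1 from rfl, Nat.factorial_succ, Nat.factorial_succ]
  have hf : ((Nat.factorial n : ℂ)) ≠ 0 := Nat.cast_ne_zero.mpr (Nat.factorial_ne_zero _)
  have h0 : ((n : ℂ) + 1) ≠ 0 := by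
    have : ((n : ℂ) + 1) = ((n + 1 : ℕ) : ℂ) := by push_cast; ring
    rw [this]; exact Nat.cast_ne_zero.mpr (by omega)
  have h1 : ((n : ℂ) + 1 + 1) ≠ 0 := by
    have : ((n : ℂ) + 1 + 1) = ((n + 2 : ℕ) : ℂ) := by push_cast; ring
    rw [this]; exact Nat.cast_ne_zero.mpr (by omega)
  push_cast
  rw [show (↑n + 1) * ((↑n + 1 + 1) * ((-1 : ℂ) ^ k / ((↑n + 1 + 1) * ((↑n + 1) * ↑n.factorial))))
      = ((↑n + 1) * ((↑n + 1 + 1) * (-1 : ℂ) ^ k)) / ((↑n + 1 + 1) * ((↑n + 1) * ↑n.factorial)) from by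
    ring]
  rw [div_eq_div_iff (mul_ne_zero h1 (mul_ne_zero h0 hf)) hf]
  ring

lemma mA_zero {N : ℕ} (A : Matrix (Fin N) (Fin N) ℂ) (u : Fin N → ℂ)
    (M : ℕ) (c : ℕ → ℂ) : mA A u (M + 1) c 0 = 0 := by
  unfold mA
  have : ∀ k : ℕ, (((0 : ℝ) : ℂ) ^ (2 * k + (M + 1)) * c k) • (A ^ k).mulVec u = 0 := by
    intro k
    rw [Complex.ofReal_zero, zero_pow (by omega), zero_mul, zero_smul]
  rw [tsum_congr this, tsum_zero]

/-- for `l ≥ 2`, `y(t) = t^l φ_l(t² A) u` solves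
`y'' + A y = t^{l-2} u/(l-2)!`, `y(0) = 0`, `y'(0) = 0`. -/
theorem oscM_solves_inhomogeneous_ivp {N : ℕ} (A : Matrix (Fin N) (Fin N) ℂ)
    (u : Fin N → ℂ) (l : ℕ) (hl : 2 ≤ l) :
    let y : ℝ → (Fin N → ℂ) := fun t =>
      ((t : ℂ) ^ l) • (oscM l (((t : ℂ) ^ 2) • A)).mulVec u
    (∀ t, DifferentiableAt ℝ y t) ∧ (∀ t, DifferentiableAt ℝ (deriv y) t) ∧
      (∀ t : ℝ, deriv (deriv y) t + A.mulVec (y t) =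
        ((t : ℂ) ^ (l - 2) / (Nat.factorial (l - 2) : ℂ)) • u) ∧
      y 0 = 0 ∧ deriv y 0 = 0 := by
  intro y
  obtain ⟨m, rfl⟩ : ∃ m, l = m + 2 := ⟨l - 2, by omega⟩
  have hy : y = fun t => mA A u (m + 2) (cQ (m + 2)) t :=
    funext fun t => oscM_mulVec_eq_mA A u (m + 2) t
  -- first derivative
  have hderiv1 : ∀ t, HasDerivAt y
      (mA A u (m + 1) (fun k => (((2 * k + (m + 1) : ℕ) : ℂ) + 1) * cQ (m + 2) k) t) t := by
    intro t
    rw [hy]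
    exact mA_hasDerivAt A u (m + 1) (cQ (m + 2)) 1 zero_le_one
      (fun k => norm_cQ_le (m + 2) k) t
  have hdy : deriv y = fun t =>
      mA A u (m + 1) (fun k => (((2 * k + (m + 1) : ℕ) : ℂ) + 1) * cQ (m + 2) k) t :=
    funext fun t => (hderiv1 t).deriv
  -- second derivative
  have hderiv2 : ∀ t, HasDerivAt
      (fun s => mA A u (m + 1) (fun k => (((2 * k + (m + 1) : ℕ) : ℂ) + 1) * cQ (m + 2) k) s)
      (mA A u m (fun k => (((2 * k + m : ℕ) : ℂ) + 1) *
        ((((2 * k + (m + 1) : ℕ) : ℂ) + 1) * cQ (m + 2) k)) t) t := by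
    intro t
    exact mA_hasDerivAt A u m _ 1 zero_le_one
      (fun k => norm_step (m + 1) (cQ (m + 2)) 1 (fun j => norm_cQ_le (m + 2) j) k) t
  refine ⟨fun t => (hderiv1 t).differentiableAt, ?_, ?_, ?_, ?_⟩
  · rw [hdy]; exact fun t => (hderiv2 t).differentiableAt
  · -- the ODE
    intro t
    rw [hdy]
    rw [(hderiv2 t).deriv]
    -- rewrite the coefficient of the second derivative
    have hcoeff : mA A u m (fun k => (((2 * k + m : ℕ) : ℂ) + 1) *
        ((((2 * k + (m + 1) : ℕ) : ℂ) + 1) * cQ (m + 2) k)) t = mA A u m (cQ m) t := by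
      unfold mA
      apply tsum_congr fun k => ?_
      congr 2
      unfold cQ
      beta_reduce
      have e1 : 2 * k + (m + 1) = (2 * k + m) + 1 := rfl
      have e2 : 2 * k + (m + 2) = (2 * k + m) + 2 := rfl
      rw [e1, e2]
      exact coeff_collapse (2 * k + m) k
    rw [hcoeff, hy]
    -- A.mulVec of the series
    have hsum0 : Summable (fun k : ℕ =>
        (((t : ℂ)) ^ (2 * k + (m + 2)) * cQ (m + 2) k) • (A ^ k).mulVec u) :=
      mA_summable A u (m + 2) (cQ (m + 2)) 1 zero_le_one (fun k => norm_cQ_le _ k) t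
    have hAy : A.mulVec (mA A u (m + 2) (cQ (m + 2)) t)
        = ∑' k : ℕ, (((t : ℂ)) ^ (2 * k + (m + 2)) * cQ (m + 2) k) • (A ^ (k + 1)).mulVec u := by
      rw [show A.mulVec (mA A u (m + 2) (cQ (m + 2)) t)
          = mulVecL A (mA A u (m + 2) (cQ (m + 2)) t) from rfl]
      unfold mA
      rw [(mulVecL A).map_tsum hsum0]
      apply tsum_congr fun k => ?_
      rw [mulVecL_apply, Matrix.mulVec_smul, Matrix.mulVec_mulVec, ← pow_succ']
    -- each term is the negative of the shifted term of `mA A u m (cQ m)`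
    have hneg : ∀ k : ℕ, (((t : ℂ)) ^ (2 * k + (m + 2)) * cQ (m + 2) k) • (A ^ (k + 1)).mulVec u
        = -((((t : ℂ)) ^ (2 * (k + 1) + m) * cQ m (k + 1)) • (A ^ (k + 1)).mulVec u) := by
      intro k
      have he : 2 * (k + 1) + m = 2 * k + (m + 2) := by ring
      rw [he]
      unfold cQ
      rw [← neg_smul]
      congr 1
      rw [pow_succ]
      ring
    have hFsum : Summable (fun k : ℕ =>
        (((t : ℂ)) ^ (2 * k + m) * cQ m k) • (A ^ k).mulVec u) :=
      mA_summable A u m (cQ m) 1 zero_le_one (fun k => norm_cQ_le _ k) t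
    have hsplit : mA A u m (cQ m) t
        = (((t : ℂ)) ^ (2 * 0 + m) * cQ m 0) • (A ^ 0).mulVec u
          + ∑' k : ℕ, (((t : ℂ)) ^ (2 * (k + 1) + m) * cQ m (k + 1)) • (A ^ (k + 1)).mulVec u := by
      unfold mA
      exact hFsum.tsum_eq_zero_add
    rw [hAy, tsum_congr hneg, tsum_neg, hsplit]
    have hF0 : (((t : ℂ)) ^ (2 * 0 + m) * cQ m 0) • (A ^ 0).mulVec u
        = ((t : ℂ) ^ (m + 2 - 2) / (Nat.factorial (m + 2 - 2) : ℂ)) • u := by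
      have hm : m + 2 - 2 = m := by omega
      rw [hm]
      unfold cQ
      simp [Matrix.one_mulVec, mul_one_div, div_eq_mul_inv]
    rw [hF0]
    abel
  · rw [hy]; exact mA_zero A u (m + 1) _
  · rw [hdy]; exact mA_zero A u m _
end

section
/- For every nonnegative real number x and every natural number k, the scalar oscillatory function satisfies |φ_k(x)| ≤ 1/k!, where φ_k(x) = Σ_{j=0}^∞ (−1)^j x^j/(2j+k)!. -/
open MeasureTheory intervalIntegral

/-- Auxiliary: `g_k(s) = ∑ (-1)^j s^(2j+k)/(2j+k)!`, the k-th iterated antiderivative of cos. -/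
noncomputable def gosc (k : ℕ) (s : ℝ) : ℝ :=
  ∑' j : ℕ, (-1 : ℝ) ^ j * s ^ (2 * j + k) / (Nat.factorial (2 * j + k) : ℝ)

lemma gosc_norm (k j : ℕ) (s : ℝ) :
    ‖(-1 : ℝ) ^ j * s ^ (2 * j + k) / (Nat.factorial (2 * j + k) : ℝ)‖
      = |s| ^ (2 * j + k) / (Nat.factorial (2 * j + k) : ℝ) := by
  rw [Real.norm_eq_abs, abs_div, abs_mul, abs_pow, abs_pow, abs_neg, abs_one, one_pow, one_mul,
    Nat.abs_cast]

lemma summable_gosc_aux (k : ℕ) (s : ℝ) :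
    Summable (fun j : ℕ => |s| ^ (2 * j + k) / (Nat.factorial (2 * j + k) : ℝ)) := by
  have h := (Real.summable_pow_div_factorial |s|).comp_injective
    (i := fun j : ℕ => 2 * j + k) (fun a b hab => by simp only at hab; omega)
  exact h

lemma summable_gosc (k : ℕ) (s : ℝ) :
    Summable (fun j : ℕ => (-1 : ℝ) ^ j * s ^ (2 * j + k) / (Nat.factorial (2 * j + k) : ℝ)) := by
  apply Summable.of_norm
  simpa only [gosc_norm] using summable_gosc_aux k s

lemma measurable_gosc (k : ℕ) : Measurable (gosc k) := by
  apply measurable_of_tendsto_metrizable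
    (f := fun n s => ∑ j ∈ Finset.range n,
      (-1 : ℝ) ^ j * s ^ (2 * j + k) / (Nat.factorial (2 * j + k) : ℝ))
  · intro n
    apply Finset.measurable_sum
    intro j _
    fun_prop
  · rw [tendsto_pi_nhds]
    intro s
    exact (summable_gosc k s).hasSum.tendsto_sum_nat

lemma gosc_zero (s : ℝ) : gosc 0 s = Real.cos s := by
  rw [Real.cos_eq_tsum]
  simp [gosc]

lemma gosc_succ (k : ℕ) (s : ℝ) (hs : 0 ≤ s) :
    gosc (k + 1) s = ∫ t in (0:ℝ)..s, gosc k t := by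
  rw [intervalIntegral.integral_of_le hs]
  have key : ∑' j : ℕ, (∫ t in Set.Ioc (0:ℝ) s,
        (-1 : ℝ) ^ j * t ^ (2 * j + k) / (Nat.factorial (2 * j + k) : ℝ))
      = ∫ t in Set.Ioc (0:ℝ) s, gosc k t := by
    apply MeasureTheory.integral_tsum_of_summable_integral_norm
    · intro j
      apply Continuous.integrableOn_Ioc
      fun_prop
    · apply Summable.of_nonneg_of_le (f := fun j : ℕ =>
        Real.exp s * (|s| ^ (2 * j + k) / (Nat.factorial (2 * j + k) : ℝ)))
      · intro j
        exact integral_nonneg fun _ => norm_nonneg _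
      · intro j
        have hb : ∀ t ∈ Set.Ioc (0:ℝ) s,
            ‖(-1 : ℝ) ^ j * t ^ (2 * j + k) / (Nat.factorial (2 * j + k) : ℝ)‖
              ≤ |s| ^ (2 * j + k) / (Nat.factorial (2 * j + k) : ℝ) := by
          intro t ht
          rw [gosc_norm]
          have htle : |t| ≤ |s| := by
            rw [abs_of_nonneg ht.1.le, abs_of_nonneg hs]; exact ht.2
          gcongr
        calc ∫ t in Set.Ioc (0:ℝ) s,
              ‖(-1 : ℝ) ^ j * t ^ (2 * j + k) / (Nat.factorial (2 * j + k) : ℝ)‖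
            ≤ ∫ _t in Set.Ioc (0:ℝ) s,
              (|s| ^ (2 * j + k) / (Nat.factorial (2 * j + k) : ℝ)) := by
              apply MeasureTheory.setIntegral_mono_on
              · apply Continuous.integrableOn_Ioc; fun_prop
              · exact integrableOn_const (measure_Ioc_lt_top).ne
              · exact measurableSet_Ioc
              · exact hb
          _ ≤ Real.exp s * (|s| ^ (2 * j + k) / (Nat.factorial (2 * j + k) : ℝ)) := by
              rw [MeasureTheory.setIntegral_const, MeasureTheory.measureReal_def, Real.volume_Ioc, smul_eq_mul]
              have hC : (0:ℝ) ≤ |s| ^ (2*j+k) / (Nat.factorial (2*j+k) : ℝ) := by positivity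
              apply mul_le_mul_of_nonneg_right _ hC
              rw [ENNReal.toReal_ofReal (by linarith)]
              have := Real.add_one_le_exp s
              linarith
      · exact (summable_gosc_aux k s).mul_left _
  rw [← key]
  unfold gosc
  congr 1
  funext j
  rw [← intervalIntegral.integral_of_le hs, intervalIntegral.integral_div,
    intervalIntegral.integral_const_mul, integral_pow]
  have h2 : 2 * j + (k + 1) = (2 * j + k) + 1 := by ring
  rw [h2]
  rw [Nat.factorial_succ]
  push_cast
  field_simp
  simp

lemma abs_gosc_le (k : ℕ) (s : ℝ) (hs : 0 ≤ s) :
    |gosc k s| ≤ s ^ k / (Nat.factorial k : ℝ) := by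
  induction k generalizing s with
  | zero => simpa [gosc_zero] using Real.abs_cos_le_one s
  | succ k ih =>
    rw [gosc_succ k s hs]
    have hint : IntegrableOn (gosc k) (Set.Ioc 0 s) := by
      apply Integrable.mono' (g := fun _ => s ^ k / (Nat.factorial k : ℝ))
        (integrableOn_const (measure_Ioc_lt_top).ne)
      · exact (measurable_gosc k).aestronglyMeasurable
      · filter_upwards [ae_restrict_mem measurableSet_Ioc] with t ht
        calc ‖gosc k t‖ ≤ t ^ k / (Nat.factorial k : ℝ) := ih t ht.1.le
          _ ≤ s ^ k / (Nat.factorial k : ℝ) := by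
              gcongr <;> first | exact ht.1.le | exact ht.2
    calc |∫ t in (0:ℝ)..s, gosc k t| ≤ ∫ t in (0:ℝ)..s, |gosc k t| :=
          intervalIntegral.abs_integral_le_integral_abs hs
      _ ≤ ∫ t in (0:ℝ)..s, t ^ k / (Nat.factorial k : ℝ) := by
          apply intervalIntegral.integral_mono_on hs
          · rw [intervalIntegrable_iff_integrableOn_Ioc_of_le hs]
            exact hint.abs
          · apply Continuous.intervalIntegrable; fun_prop
          · intro t ht
            exact ih t ht.1
      _ = s ^ (k+1) / (Nat.factorial (k+1) : ℝ) := by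
          rw [intervalIntegral.integral_div, integral_pow, Nat.factorial_succ]
          push_cast
          field_simp
          simp

/-- The scalar oscillatory function `φ_k(x) = ∑_{j=0}^∞ (-1)^j x^j / (2j+k)!`. -/
noncomputable def oscR (k : ℕ) (x : ℝ) : ℝ :=
  ∑' j : ℕ, (-1 : ℝ) ^ j * x ^ j / (Nat.factorial (2 * j + k) : ℝ)

/-- for `x ≥ 0`, `|φ_k(x)| ≤ 1/k!`. -/
theorem abs_oscR_le (k : ℕ) (x : ℝ) (hx : 0 ≤ x) :
    |oscR k x| ≤ 1 / (Nat.factorial k : ℝ) := by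
  rcases eq_or_lt_of_le hx with h0 | hpos
  · have : oscR k x = 1 / (Nat.factorial k : ℝ) := by
      rw [oscR, tsum_eq_single 0]
      · simp [← h0]
      · intro j hj
        rw [← h0]
        simp [zero_pow hj]
    rw [this, abs_of_nonneg (by positivity)]
  · set y := Real.sqrt x with hy
    have hy0 : 0 < y := Real.sqrt_pos.2 hpos
    have hy2 : y ^ 2 = x := Real.sq_sqrt hx
    have key : gosc k y = y ^ k * oscR k x := by
      rw [gosc, oscR, ← tsum_mul_left]
      congr 1
      funext j
      rw [pow_add, pow_mul, hy2]
      ring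
    have h1 := abs_gosc_le k y hy0.le
    rw [key, abs_mul, abs_pow, abs_of_nonneg hy0.le, div_eq_mul_one_div] at h1
    exact le_of_mul_le_mul_left h1 (pow_pos hy0 k)
end

section
/- Let 𝔸 be a complex Banach algebra with identity I, let l ∈ ℕ, and let C, Ĉ : {0,…,l} × ℕ → 𝔸 be two families satisfying, for all i ∈ ℕ, the same quadruple-angle recurrences: C_{0,i+1} = 2C_{0,i}^2 − I, C_{1,i+1} = C_{0,i}C_{1,i}, and C_{k,i+1} = 2^{−k}( C_{0,i}C_{k,i} + C_{1,i}C_{k−1,i} + Σ_{j=2}^{k} C_{j,i}/(k−j)! ) for 2 ≤ k ≤ l, and likewise for Ĉ. Set E_{k,i} = Ĉ_{k,i} − C_{k,i}, and assume ‖E_{k,i}‖ ≤ 0.05·‖C_{k,i}‖ for k = 0, 1 and all i. Then for k ∈ {0,1} and all i ∈ ℕ: ‖E_{k,i}‖ ≤ 4.1^i · ( Π_{j=0}^{i−1} max_{0≤ι≤k} ‖C_{ι,j}‖ ) · max_{0≤ι≤k} ‖E_{ι,0}‖. -/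
lemma quad_aux0 {𝔸 : Type*} [NormedRing 𝔸] [NormedAlgebra ℂ 𝔸] (a b : 𝔸)
    (hb : ‖b - a‖ ≤ 0.05 * ‖a‖) :
    ‖((2 : ℂ) • b ^ 2 - 1) - ((2 : ℂ) • a ^ 2 - 1)‖ ≤ 4.1 * ‖a‖ * ‖b - a‖ := by
  have key : ((2 : ℂ) • b ^ 2 - 1) - ((2 : ℂ) • a ^ 2 - 1)
      = (2 : ℂ) • (b * (b - a) + (b - a) * a) := by
    have h : b * (b - a) + (b - a) * a = b ^ 2 - a ^ 2 := by noncomm_ring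
    rw [h, smul_sub]; abel
  rw [key, norm_smul]
  have h2 : ‖(2 : ℂ)‖ = 2 := by simp
  rw [h2]
  have hba : ‖b‖ ≤ 1.05 * ‖a‖ := by
    have := norm_sub_norm_le b a
    linarith
  have h3 : ‖b * (b - a) + (b - a) * a‖ ≤ ‖b‖ * ‖b - a‖ + ‖b - a‖ * ‖a‖ :=
    le_trans (norm_add_le _ _) (add_le_add (norm_mul_le _ _) (norm_mul_le _ _))
  have hna : (0:ℝ) ≤ ‖a‖ := norm_nonneg a
  have hne : (0:ℝ) ≤ ‖b - a‖ := norm_nonneg _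
  nlinarith

lemma quad_aux1 {𝔸 : Type*} [NormedRing 𝔸] (a0 a1 b0 b1 : 𝔸) :
    ‖b0 * b1 - a0 * a1‖ ≤ ‖b0‖ * ‖b1 - a1‖ + ‖b0 - a0‖ * ‖a1‖ := by
  have key : b0 * b1 - a0 * a1 = b0 * (b1 - a1) + (b0 - a0) * a1 := by noncomm_ring
  rw [key]
  exact le_trans (norm_add_le _ _) (add_le_add (norm_mul_le _ _) (norm_mul_le _ _))

/-- error bound for the quadruple-angle recurrence, for `k ∈ {0, 1}`:
`‖E_{k,i}‖ ≤ 4.1^i ⬝ (∏_{j=0}^{i-1} max_{0≤ι≤k} ‖C_{ι,j}‖) ⬝ max_{0≤ι≤k} ‖E_{ι,0}‖`. -/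
theorem quadruple_recurrence_error_bound_low {𝔸 : Type*} [NormedRing 𝔸]
    [NormedAlgebra ℂ 𝔸] [CompleteSpace 𝔸] (l : ℕ) (C Chat : ℕ → ℕ → 𝔸)
    (hC0 : ∀ i, C 0 (i + 1) = (2 : ℂ) • (C 0 i) ^ 2 - 1)
    (hC1 : ∀ i, C 1 (i + 1) = C 0 i * C 1 i)
    (hCk : ∀ i, ∀ k, 2 ≤ k → k ≤ l →
      C k (i + 1) = (((2 : ℂ) ^ k))⁻¹ •
        (C 0 i * C k i + C 1 i * C (k - 1) i +
          ∑ j ∈ Finset.Icc 2 k, ((Nat.factorial (k - j) : ℂ))⁻¹ • C j i))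
    (hChat0 : ∀ i, Chat 0 (i + 1) = (2 : ℂ) • (Chat 0 i) ^ 2 - 1)
    (hChat1 : ∀ i, Chat 1 (i + 1) = Chat 0 i * Chat 1 i)
    (hChatk : ∀ i, ∀ k, 2 ≤ k → k ≤ l →
      Chat k (i + 1) = (((2 : ℂ) ^ k))⁻¹ •
        (Chat 0 i * Chat k i + Chat 1 i * Chat (k - 1) i +
          ∑ j ∈ Finset.Icc 2 k, ((Nat.factorial (k - j) : ℂ))⁻¹ • Chat j i))
    (hE : ∀ i, ∀ k, k ≤ 1 → ‖Chat k i - C k i‖ ≤ 0.05 * ‖C k i‖)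
    (k : ℕ) (hk : k ≤ 1) (i : ℕ) :
    ‖Chat k i - C k i‖ ≤
      (4.1 : ℝ) ^ i *
        (∏ j ∈ Finset.range i,
          (Finset.range (k + 1)).sup' Finset.nonempty_range_add_one fun ι => ‖C ι j‖) *
        ((Finset.range (k + 1)).sup' Finset.nonempty_range_add_one fun ι =>
          ‖Chat ι 0 - C ι 0‖) := by
  -- step bounds
  have step0 : ∀ i, ‖Chat 0 (i + 1) - C 0 (i + 1)‖ ≤
      4.1 * ‖C 0 i‖ * ‖Chat 0 i - C 0 i‖ := by
    intro i
    rw [hC0 i, hChat0 i]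
    exact quad_aux0 _ _ (hE i 0 (by norm_num))
  have step1 : ∀ i, ‖Chat 1 (i + 1) - C 1 (i + 1)‖ ≤
      ‖Chat 0 i‖ * ‖Chat 1 i - C 1 i‖ + ‖Chat 0 i - C 0 i‖ * ‖C 1 i‖ := by
    intro i
    rw [hC1 i, hChat1 i]
    exact quad_aux1 _ _ _ _
  interval_cases k
  · -- k = 0
    simp only [zero_add, Finset.range_one, Finset.sup'_singleton]
    induction i with
    | zero => simp
    | succ n ih =>
      rw [Finset.prod_range_succ, pow_succ]
      have h1 := step0 n
      have hc : (0:ℝ) ≤ ‖C 0 n‖ := norm_nonneg _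
      have he0 : (0:ℝ) ≤ ‖Chat 0 0 - C 0 0‖ := norm_nonneg _
      have hp : (0:ℝ) ≤ (4.1 : ℝ) ^ n * ∏ j ∈ Finset.range n, ‖C 0 j‖ := by
        positivity
      nlinarith [mul_le_mul_of_nonneg_left ih (by positivity :
        (0:ℝ) ≤ 4.1 * ‖C 0 n‖)]
  · -- k = 1
    have hsup : ∀ (f : ℕ → ℝ),
        (Finset.range (1 + 1)).sup' Finset.nonempty_range_add_one f = max (f 0) (f 1) := by
      intro f
      apply le_antisymm
      · apply Finset.sup'_le
        intro b hb
        simp only [Finset.mem_range] at hb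
        interval_cases b
        · exact le_max_left _ _
        · exact le_max_right _ _
      · apply max_le
        · exact Finset.le_sup' f (by simp)
        · exact Finset.le_sup' f (by simp)
    simp only [hsup]
    have key : ∀ i, max ‖Chat 0 i - C 0 i‖ ‖Chat 1 i - C 1 i‖ ≤
        (4.1 : ℝ) ^ i * (∏ j ∈ Finset.range i, max ‖C 0 j‖ ‖C 1 j‖) *
          max ‖Chat 0 0 - C 0 0‖ ‖Chat 1 0 - C 1 0‖ := by
      intro i
      induction i with
      | zero => simp
      | succ n ih =>
        set M := max ‖C 0 n‖ ‖C 1 n‖ with hM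
        set E := max ‖Chat 0 n - C 0 n‖ ‖Chat 1 n - C 1 n‖ with hEn
        have hM0 : ‖C 0 n‖ ≤ M := le_max_left _ _
        have hM1 : ‖C 1 n‖ ≤ M := le_max_right _ _
        have hE0 : ‖Chat 0 n - C 0 n‖ ≤ E := le_max_left _ _
        have hE1 : ‖Chat 1 n - C 1 n‖ ≤ E := le_max_right _ _
        have hMnn : (0:ℝ) ≤ M := le_trans (norm_nonneg _) hM0
        have hEnn : (0:ℝ) ≤ E := le_trans (norm_nonneg _) hE0
        have hchat0 : ‖Chat 0 n‖ ≤ 1.05 * ‖C 0 n‖ := by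
          have h := hE n 0 (by norm_num)
          have := norm_sub_norm_le (Chat 0 n) (C 0 n)
          linarith
        have b0 : ‖Chat 0 (n + 1) - C 0 (n + 1)‖ ≤ 4.1 * M * E := by
          have := step0 n
          nlinarith [norm_nonneg (Chat 0 n - C 0 n), norm_nonneg (C 0 n)]
        have b1 : ‖Chat 1 (n + 1) - C 1 (n + 1)‖ ≤ 4.1 * M * E := by
          have := step1 n
          have hc0 : (0:ℝ) ≤ ‖C 0 n‖ := norm_nonneg _
          have hc1 : (0:ℝ) ≤ ‖C 1 n‖ := norm_nonneg _
          have he1 : (0:ℝ) ≤ ‖Chat 1 n - C 1 n‖ := norm_nonneg _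
          have he0' : (0:ℝ) ≤ ‖Chat 0 n - C 0 n‖ := norm_nonneg _
          nlinarith
        have hmax : max ‖Chat 0 (n + 1) - C 0 (n + 1)‖ ‖Chat 1 (n + 1) - C 1 (n + 1)‖
            ≤ 4.1 * M * E := max_le b0 b1
        rw [Finset.prod_range_succ, pow_succ]
        calc max ‖Chat 0 (n + 1) - C 0 (n + 1)‖ ‖Chat 1 (n + 1) - C 1 (n + 1)‖
            ≤ 4.1 * M * E := hmax
          _ ≤ 4.1 * M * ((4.1 : ℝ) ^ n * (∏ j ∈ Finset.range n, max ‖C 0 j‖ ‖C 1 j‖) *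
              max ‖Chat 0 0 - C 0 0‖ ‖Chat 1 0 - C 1 0‖) := by
            apply mul_le_mul_of_nonneg_left ih (by positivity)
          _ = (4.1 : ℝ) ^ n * 4.1 * ((∏ j ∈ Finset.range n, max ‖C 0 j‖ ‖C 1 j‖) * M) *
              max ‖Chat 0 0 - C 0 0‖ ‖Chat 1 0 - C 1 0‖ := by ring
    exact le_trans (le_max_right _ _) (key i)
end

section
/- Let 𝔸 be a complex Banach algebra with identity I, let l ∈ ℕ, and let C, Ĉ : {0,…,l} × ℕ → 𝔸 be two families satisfying, for all i ∈ ℕ, the same quadruple-angle recurrences: C_{0,i+1} = 2C_{0,i}^2 − I, C_{1,i+1} = C_{0,i}C_{1,i}, and C_{k,i+1} = 2^{−k}( C_{0,i}C_{k,i} + C_{1,i}C_{k−1,i} + Σ_{j=2}^{k} C_{j,i}/(k−j)! ) for 2 ≤ k ≤ l, and likewise for Ĉ. Set E_{k,i} = Ĉ_{k,i} − C_{k,i}, and assume ‖E_{k,i}‖ ≤ 0.05·‖C_{k,i}‖ for k = 0, 1 and all i. Then for every k with 2 ≤ k ≤ l and all i ∈ ℕ: ‖E_{k,i}‖ ≤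 ( Π_{j=0}^{i−1} ( 4.1 · max_{0≤ι≤k} ‖C_{ι,j}‖ + 0.25 ) ) · max_{0≤ι≤k} ‖E_{ι,0}‖. -/
lemma sum_inv_factorial_le' (n : ℕ) :
    ∑ j ∈ Finset.range (n + 1), ((Nat.factorial j : ℝ))⁻¹ ≤ 2 ^ n := by
  induction n with
  | zero => simp
  | succ n ih =>
    rw [Finset.sum_range_succ]
    have h1 : ((Nat.factorial (n + 1) : ℝ))⁻¹ ≤ 1 := by
      rw [inv_le_one_iff₀]
      right
      exact_mod_cast Nat.one_le_iff_ne_zero.mpr (Nat.factorial_ne_zero _)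
    have h2 : (1 : ℝ) ≤ 2 ^ n := one_le_pow₀ (by norm_num)
    calc ∑ j ∈ Finset.range (n + 1), ((Nat.factorial j : ℝ))⁻¹ + ((Nat.factorial (n+1) : ℝ))⁻¹
        ≤ 2 ^ n + 1 := by linarith
      _ ≤ 2 ^ (n + 1) := by rw [pow_succ]; linarith

lemma sum_Icc_inv_factorial_le (m : ℕ) (hm : 2 ≤ m) :
    ∑ j ∈ Finset.Icc 2 m, ((Nat.factorial (m - j) : ℝ))⁻¹ ≤ 2 ^ m / 4 := by
  have h1 : ∑ j ∈ Finset.Icc 2 m, ((Nat.factorial (m - j) : ℝ))⁻¹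
      = ∑ j ∈ Finset.range (m - 1), ((Nat.factorial j : ℝ))⁻¹ := by
    rw [← Finset.Ico_add_one_right_eq_Icc, Finset.sum_Ico_eq_sum_range,
      show m + 1 - 2 = m - 1 by omega,
      ← Finset.sum_range_reflect (fun j => ((Nat.factorial j : ℝ))⁻¹) (m - 1)]
    apply Finset.sum_congr rfl
    intro j hj
    simp only [Finset.mem_range] at hj
    rw [show m - (2 + j) = m - 1 - 1 - j by omega]
  rw [h1, show m - 1 = (m - 2) + 1 by omega]
  calc ∑ j ∈ Finset.range (m - 2 + 1), ((Nat.factorial j : ℝ))⁻¹ ≤ 2 ^ (m - 2) :=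
        sum_inv_factorial_le' _
    _ ≤ 2 ^ m / 4 := by
        rw [show m = (m - 2) + 2 by omega, pow_add]
        norm_num

lemma prod_diff_bound {𝔸 : Type*} [NormedRing 𝔸] (a b x y : 𝔸) (Mv Fv : ℝ)
    (h1 : ‖b - a‖ ≤ 0.05 * ‖a‖) (h2 : ‖b - a‖ ≤ Fv) (h3 : ‖y - x‖ ≤ Fv)
    (h4 : ‖a‖ ≤ Mv) (h5 : ‖x‖ ≤ Mv) (h6 : 0 ≤ Fv) (h7 : 0 ≤ Mv) :
    ‖b * y - a * x‖ ≤ 2.05 * (Mv * Fv) := by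
  have hid : b * y - a * x = (b - a) * y + a * (y - x) := by noncomm_ring
  have hy : ‖y‖ ≤ ‖x‖ + ‖y - x‖ := by have := norm_sub_norm_le y x; linarith
  calc ‖b * y - a * x‖ ≤ ‖(b - a) * y‖ + ‖a * (y - x)‖ := by rw [hid]; exact norm_add_le _ _
    _ ≤ ‖b - a‖ * ‖y‖ + ‖a‖ * ‖y - x‖ := add_le_add (norm_mul_le _ _) (norm_mul_le _ _)
    _ ≤ 2.05 * (Mv * Fv) := by
        nlinarith [norm_nonneg (b - a), norm_nonneg a, norm_nonneg (y - x), norm_nonneg x,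
          norm_nonneg y,
          mul_le_mul h2 h5 (norm_nonneg x) h6,
          mul_le_mul h1 h3 (norm_nonneg (y - x)) (by positivity : (0:ℝ) ≤ 0.05 * ‖a‖),
          mul_le_mul h4 h3 (norm_nonneg (y - x)) h7,
          mul_le_mul_of_nonneg_right h4 h6,
          mul_le_mul_of_nonneg_left hy (norm_nonneg (b - a))]

lemma prod_rec_bound' (M F : ℕ → ℝ) (hM : ∀ j, 0 ≤ M j)
    (key : ∀ i, F (i + 1) ≤ (4.1 * M i + 0.25) * F i) :
    ∀ i, F i ≤ (∏ j ∈ Finset.range i, (4.1 * M j + 0.25)) * F 0 := by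
  intro i
  induction i with
  | zero => simp
  | succ i ih =>
    rw [Finset.prod_range_succ]
    calc F (i + 1) ≤ (4.1 * M i + 0.25) * F i := key i
      _ ≤ (4.1 * M i + 0.25) * ((∏ j ∈ Finset.range i, (4.1 * M j + 0.25)) * F 0) := by
          apply mul_le_mul_of_nonneg_left ih
          nlinarith [hM i]
      _ = (∏ j ∈ Finset.range i, (4.1 * M j + 0.25)) * (4.1 * M i + 0.25) * F 0 := by ring

/-- error bound for the quadruple-angle recurrence, for `2 ≤ k ≤ l`:
`‖E_{k,i}‖ ≤ (∏_{j=0}^{i-1} (4.1 ⬝ max_{0≤ι≤k} ‖C_{ι,j}‖ + 0.25)) ⬝ max_{0≤ι≤k} ‖E_{ι,0}‖`. -/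
theorem quadruple_recurrence_error_bound_high {𝔸 : Type*} [NormedRing 𝔸]
    [NormedAlgebra ℂ 𝔸] [CompleteSpace 𝔸] (l : ℕ) (C Chat : ℕ → ℕ → 𝔸)
    (hC0 : ∀ i, C 0 (i + 1) = (2 : ℂ) • (C 0 i) ^ 2 - 1)
    (hC1 : ∀ i, C 1 (i + 1) = C 0 i * C 1 i)
    (hCk : ∀ i, ∀ k, 2 ≤ k → k ≤ l →
      C k (i + 1) = (((2 : ℂ) ^ k))⁻¹ •
        (C 0 i * C k i + C 1 i * C (k - 1) i +
          ∑ j ∈ Finset.Icc 2 k, ((Nat.factorial (k - j) : ℂ))⁻¹ • C j i))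
    (hChat0 : ∀ i, Chat 0 (i + 1) = (2 : ℂ) • (Chat 0 i) ^ 2 - 1)
    (hChat1 : ∀ i, Chat 1 (i + 1) = Chat 0 i * Chat 1 i)
    (hChatk : ∀ i, ∀ k, 2 ≤ k → k ≤ l →
      Chat k (i + 1) = (((2 : ℂ) ^ k))⁻¹ •
        (Chat 0 i * Chat k i + Chat 1 i * Chat (k - 1) i +
          ∑ j ∈ Finset.Icc 2 k, ((Nat.factorial (k - j) : ℂ))⁻¹ • Chat j i))
    (hE : ∀ i, ∀ k, k ≤ 1 → ‖Chat k i - C k i‖ ≤ 0.05 * ‖C k i‖)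
    (k : ℕ) (hk2 : 2 ≤ k) (hkl : k ≤ l) (i : ℕ) :
    ‖Chat k i - C k i‖ ≤
      (∏ j ∈ Finset.range i,
        ((4.1 : ℝ) *
            ((Finset.range (k + 1)).sup' Finset.nonempty_range_add_one fun ι => ‖C ι j‖) +
          0.25)) *
        ((Finset.range (k + 1)).sup' Finset.nonempty_range_add_one fun ι =>
          ‖Chat ι 0 - C ι 0‖) := by
  set M : ℕ → ℝ := fun j =>
    (Finset.range (k + 1)).sup' Finset.nonempty_range_add_one fun ι => ‖C ι j‖ with hMdef
  set F : ℕ → ℝ := fun j =>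
    (Finset.range (k + 1)).sup' Finset.nonempty_range_add_one fun ι => ‖Chat ι j - C ι j‖
    with hFdef
  have hCle : ∀ j ι, ι ≤ k → ‖C ι j‖ ≤ M j := fun j ι h =>
    Finset.le_sup' (fun ι => ‖C ι j‖) (Finset.mem_range.mpr (by omega))
  have hEle : ∀ j ι, ι ≤ k → ‖Chat ι j - C ι j‖ ≤ F j := fun j ι h =>
    Finset.le_sup' (fun ι => ‖Chat ι j - C ι j‖) (Finset.mem_range.mpr (by omega))
  have hMnn : ∀ j, 0 ≤ M j := fun j => le_trans (norm_nonneg _) (hCle j 0 (by omega))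
  have hFnn : ∀ j, 0 ≤ F j := fun j => le_trans (norm_nonneg _) (hEle j 0 (by omega))
  have hn2 : ‖(2 : ℂ)‖ = 2 := by simp
  have key : ∀ i, F (i + 1) ≤ (4.1 * M i + 0.25) * F i := by
    intro i
    apply Finset.sup'_le
    intro ι hι
    have hιk : ι ≤ k := by
      have := Finset.mem_range.mp hι; omega
    have hMF : (0:ℝ) ≤ M i * F i := mul_nonneg (hMnn i) (hFnn i)
    match ι, hιk with
    | 0, _ =>
      have hid : Chat 0 (i + 1) - C 0 (i + 1)
          = (2 : ℂ) • (Chat 0 i * Chat 0 i - C 0 i * C 0 i) := by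
        rw [hChat0, hC0, sub_sub_sub_cancel_right, ← smul_sub]
        congr 1
        noncomm_ring
      rw [hid, norm_smul, hn2]
      have hb : ‖Chat 0 i * Chat 0 i - C 0 i * C 0 i‖ ≤ 2.05 * (M i * F i) :=
        prod_diff_bound (C 0 i) (Chat 0 i) (C 0 i) (Chat 0 i) (M i) (F i)
          (hE i 0 (by omega)) (hEle i 0 (by omega)) (hEle i 0 (by omega))
          (hCle i 0 (by omega)) (hCle i 0 (by omega)) (hFnn i) (hMnn i)
      nlinarith [hFnn i]
    | 1, _ =>
      have hid : Chat 1 (i + 1) - C 1 (i + 1)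
          = Chat 0 i * Chat 1 i - C 0 i * C 1 i := by rw [hChat1, hC1]
      rw [hid]
      have hb : ‖Chat 0 i * Chat 1 i - C 0 i * C 1 i‖ ≤ 2.05 * (M i * F i) :=
        prod_diff_bound (C 0 i) (Chat 0 i) (C 1 i) (Chat 1 i) (M i) (F i)
          (hE i 0 (by omega)) (hEle i 0 (by omega)) (hEle i 1 (by omega))
          (hCle i 0 (by omega)) (hCle i 1 (by omega)) (hFnn i) (hMnn i)
      nlinarith [hFnn i]
    | (m + 2), hmk =>
      have hml : m + 2 ≤ l := le_trans hmk hkl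
      have hid : Chat (m + 2) (i + 1) - C (m + 2) (i + 1)
          = ((2 : ℂ) ^ (m + 2))⁻¹ •
            ((Chat 0 i * Chat (m + 2) i - C 0 i * C (m + 2) i)
              + (Chat 1 i * Chat (m + 1) i - C 1 i * C (m + 1) i)
              + ∑ j ∈ Finset.Icc 2 (m + 2),
                  ((Nat.factorial (m + 2 - j) : ℂ))⁻¹ • (Chat j i - C j i)) := by
        rw [hChatk i (m + 2) (by omega) hml, hCk i (m + 2) (by omega) hml, ← smul_sub,
          show m + 2 - 1 = m + 1 by omega]
        congr 1
        simp only [smul_sub, Finset.sum_sub_distrib]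
        abel
      have p1 : ‖Chat 0 i * Chat (m + 2) i - C 0 i * C (m + 2) i‖ ≤ 2.05 * (M i * F i) :=
        prod_diff_bound _ _ _ _ _ _
          (hE i 0 (by omega)) (hEle i 0 (by omega)) (hEle i (m + 2) hmk)
          (hCle i 0 (by omega)) (hCle i (m + 2) hmk) (hFnn i) (hMnn i)
      have p2 : ‖Chat 1 i * Chat (m + 1) i - C 1 i * C (m + 1) i‖ ≤ 2.05 * (M i * F i) :=
        prod_diff_bound _ _ _ _ _ _
          (hE i 1 (by omega)) (hEle i 1 (by omega)) (hEle i (m + 1) (by omega))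
          (hCle i 1 (by omega)) (hCle i (m + 1) (by omega)) (hFnn i) (hMnn i)
      have psum : ‖∑ j ∈ Finset.Icc 2 (m + 2),
            ((Nat.factorial (m + 2 - j) : ℂ))⁻¹ • (Chat j i - C j i)‖
          ≤ (2 ^ (m + 2) / 4) * F i := by
        calc ‖∑ j ∈ Finset.Icc 2 (m + 2),
              ((Nat.factorial (m + 2 - j) : ℂ))⁻¹ • (Chat j i - C j i)‖
            ≤ ∑ j ∈ Finset.Icc 2 (m + 2),
              ‖((Nat.factorial (m + 2 - j) : ℂ))⁻¹ • (Chat j i - C j i)‖ :=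
              norm_sum_le _ _
          _ ≤ ∑ j ∈ Finset.Icc 2 (m + 2), ((Nat.factorial (m + 2 - j) : ℝ))⁻¹ * F i := by
              apply Finset.sum_le_sum
              intro j hj
              have hjk : j ≤ k := by
                have := (Finset.mem_Icc.mp hj).2; omega
              rw [norm_smul, norm_inv]
              have hnf : ‖((Nat.factorial (m + 2 - j) : ℂ))‖
                  = (Nat.factorial (m + 2 - j) : ℝ) := by
                simp
              rw [hnf]
              exact mul_le_mul_of_nonneg_left (hEle i j hjk) (by positivity)
          _ = (∑ j ∈ Finset.Icc 2 (m + 2), ((Nat.factorial (m + 2 - j) : ℝ))⁻¹) * F i :=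
              (Finset.sum_mul _ _ _).symm
          _ ≤ (2 ^ (m + 2) / 4) * F i :=
              mul_le_mul_of_nonneg_right (sum_Icc_inv_factorial_le _ (by omega)) (hFnn i)
      rw [hid, norm_smul, norm_inv, norm_pow, hn2]
      have hX : ‖(Chat 0 i * Chat (m + 2) i - C 0 i * C (m + 2) i)
            + (Chat 1 i * Chat (m + 1) i - C 1 i * C (m + 1) i)
            + ∑ j ∈ Finset.Icc 2 (m + 2),
                ((Nat.factorial (m + 2 - j) : ℂ))⁻¹ • (Chat j i - C j i)‖
          ≤ 4.1 * (M i * F i) + (2 ^ (m + 2) / 4) * F i := by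
        calc _ ≤ ‖(Chat 0 i * Chat (m + 2) i - C 0 i * C (m + 2) i)
              + (Chat 1 i * Chat (m + 1) i - C 1 i * C (m + 1) i)‖
              + ‖∑ j ∈ Finset.Icc 2 (m + 2),
                  ((Nat.factorial (m + 2 - j) : ℂ))⁻¹ • (Chat j i - C j i)‖ :=
              norm_add_le _ _
          _ ≤ _ := by
              have := norm_add_le (Chat 0 i * Chat (m + 2) i - C 0 i * C (m + 2) i)
                (Chat 1 i * Chat (m + 1) i - C 1 i * C (m + 1) i)
              linarith
      have hp4 : (4 : ℝ) ≤ 2 ^ (m + 2) := by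
        calc (4 : ℝ) = 2 ^ 2 := by norm_num
          _ ≤ 2 ^ (m + 2) := by
              apply pow_le_pow_right₀ (by norm_num)
              omega
      have hppos : (0 : ℝ) < 2 ^ (m + 2) := by positivity
      have hinv1 : ((2 : ℝ) ^ (m + 2))⁻¹ ≤ 1 := by
        rw [inv_le_one_iff₀]; right; linarith
      calc ((2 : ℝ) ^ (m + 2))⁻¹ * ‖(Chat 0 i * Chat (m + 2) i - C 0 i * C (m + 2) i)
            + (Chat 1 i * Chat (m + 1) i - C 1 i * C (m + 1) i)
            + ∑ j ∈ Finset.Icc 2 (m + 2),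
                ((Nat.factorial (m + 2 - j) : ℂ))⁻¹ • (Chat j i - C j i)‖
          ≤ ((2 : ℝ) ^ (m + 2))⁻¹ * (4.1 * (M i * F i) + (2 ^ (m + 2) / 4) * F i) :=
            mul_le_mul_of_nonneg_left hX (by positivity)
        _ = ((2 : ℝ) ^ (m + 2))⁻¹ * (4.1 * (M i * F i)) + F i / 4 := by
            field_simp
        _ ≤ 4.1 * (M i * F i) + 0.25 * F i := by
            have h1 : ((2 : ℝ) ^ (m + 2))⁻¹ * (4.1 * (M i * F i)) ≤ 1 * (4.1 * (M i * F i)) :=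
              mul_le_mul_of_nonneg_right hinv1 (by nlinarith)
            linarith
        _ = (4.1 * M i + 0.25) * F i := by ring
  have main := prod_rec_bound' M F hMnn key i
  exact le_trans (hEle i k (le_refl k)) main
end
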